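/- arXiv:1612.09157 — 7 statements merged into one kernel-verified Lean document; each statement's English description precedes it below -/
import Mathlib

section
/- Let R be a commutative ℚ-algebra, A a commutative R-algebra, I a finite index set, and (ξ_i)_{i∈I}, (η_i)_{i∈I} families of R-linear derivations of A such that all of the maps ξ_i, η_j (i,j ∈ I) pairwise commute. Then the exponential product ⋆ on A[[ħ]] determined by this data is associative, so (A[[ħ]], ⋆) is an associative unital R[[ħ]]-algebra with unit 1. (This is the finite-rank case of the paper's Proposition that any exponential product is associative.) -/
/-!
Write `F ⋆ G = ∑ₙ ħⁿ Bₙ(F, G)` with `Bₙ(F, G) = (1/n!) ∑_{|w| = n} ξ_w F · η_w G`, the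
derivations acting coefficientwise on `A[[ħ]]`. Since all the derivations commute, `ξᵢ` and `ηᵢ` are
derivations of `⋆`, and `d/dħ` satisfies the twisted Leibniz rule
`(F ⋆ G)' = F' ⋆ G + F ⋆ G' + ∑ᵢ ξᵢ F ⋆ ηᵢ G`.
Consequently the `ħ`-derivative of the associator `(F ⋆ G) ⋆ H - F ⋆ (G ⋆ H)` is a sum of
associators, and likewise for `1 ⋆ F - F` and `F ⋆ 1 - F`. All of these vanish at `ħ = 0`, and
over a `ℚ`-algebra a power series is determined by its constant term and its derivative, so
induction on the degree shows that they vanish identically.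
-/

/-- Iterated application of a family of derivations: `compDer ξ k w = ξ (w 0) ∘ ⋯ ∘ ξ (w (k-1))`. -/
noncomputable def compDer {R A : Type*} [CommRing R] [CommRing A] [Algebra R A]
    {I : Type*} (ξ : I → Derivation R A A) : (k : ℕ) → (Fin k → I) → A → A
  | 0, _, a => a
  | k + 1, w, a => ξ (w 0) (compDer ξ k (fun i => w i.succ) a)

/-- The exponential product on `A[[ħ]]` determined by the families of derivations `ξ`, `η`:
for `F, G ∈ A`, `F ⋆ G = Σ_n (ħ^n/n!) Σ_{i₁,…,iₙ} (ξ_{i₁}∘⋯∘ξ_{iₙ})(F) · (η_{i₁}∘⋯∘η_{iₙ})(G)`,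
extended coefficientwise (`R[[ħ]]`-bilinearly) to `A[[ħ]]`. -/
noncomputable def expProd {R A : Type*} [CommRing R] [CommRing A] [Algebra R A] [Algebra ℚ A]
    {I : Type*} [Fintype I] (ξ η : I → Derivation R A A) (F G : PowerSeries A) :
    PowerSeries A :=
  PowerSeries.mk fun N =>
    ∑ mn ∈ Finset.HasAntidiagonal.antidiagonal N, ∑ ab ∈ Finset.HasAntidiagonal.antidiagonal mn.1,
      (mn.2.factorial : ℚ)⁻¹ •
        ∑ w : Fin mn.2 → I,
          compDer ξ mn.2 w (PowerSeries.coeff ab.1 F) *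
            compDer η mn.2 w (PowerSeries.coeff ab.2 G)

open Finset PowerSeries

section CompDer

variable {R A B I : Type*} [CommRing R] [CommRing A] [Algebra R A] [CommRing B] [Algebra R B]

lemma map_compDer {ξ : I → Derivation R A A} {ξ' : I → Derivation R B B} {f : B → A}
    (hf : ∀ i b, f (ξ' i b) = ξ i (f b)) (k : ℕ) (w : Fin k → I) (b : B) :
    f (compDer ξ' k w b) = compDer ξ k w (f b) := by
  induction k generalizing b with
  | zero => rfl
  | succ k ih => simp only [compDer, hf, ih]

variable (ξ : I → Derivation R A A)

lemma compDer_cons (k : ℕ) (i : I) (w : Fin k → I) (a : A) :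
    compDer ξ (k + 1) (Fin.cons i w) a = ξ i (compDer ξ k w a) := by
  simp only [compDer, Fin.cons_zero, Fin.cons_succ]

lemma compDer_add (k : ℕ) (w : Fin k → I) (a b : A) :
    compDer ξ k w (a + b) = compDer ξ k w a + compDer ξ k w b := by
  induction k generalizing a b with
  | zero => rfl
  | succ k ih => simp only [compDer, ih, map_add]

end CompDer

section Bidiff

variable {R B I : Type*} [CommRing R] [CommRing B] [Algebra R B] [Algebra ℚ B] [Fintype I]
variable (ξ η : I → Derivation R B B)

noncomputable def bidiff (n : ℕ) (x y : B) : B :=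
  (n.factorial : ℚ)⁻¹ • ∑ w : Fin n → I, compDer ξ n w x * compDer η n w y

lemma bidiff_zero (x y : B) : bidiff ξ η 0 x y = x * y := by
  simp [bidiff, compDer]

lemma bidiff_add_left (n : ℕ) (x x' y : B) :
    bidiff ξ η n (x + x') y = bidiff ξ η n x y + bidiff ξ η n x' y := by
  simp only [bidiff, compDer_add, add_mul, sum_add_distrib, smul_add]

lemma bidiff_add_right (n : ℕ) (x y y' : B) :
    bidiff ξ η n x (y + y') = bidiff ξ η n x y + bidiff ξ η n x y' := by
  simp only [bidiff, compDer_add, mul_add, sum_add_distrib, smul_add]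

lemma leibniz_bidiff {S : Type*} [CommRing S] [Algebra S B] (D : Derivation S B B)
    (hξ : ∀ i b, D (ξ i b) = ξ i (D b)) (hη : ∀ i b, D (η i b) = η i (D b))
    (n : ℕ) (x y : B) :
    D (bidiff ξ η n x y) = bidiff ξ η n (D x) y + bidiff ξ η n x (D y) := by
  simp only [bidiff, map_rat_smul, map_sum, Derivation.leibniz, smul_eq_mul,
    map_compDer hξ, map_compDer hη, ← smul_add, ← sum_add_distrib]
  congr 1
  refine sum_congr rfl fun w _ => ?_
  ring

lemma succ_smul_bidiff_succ (hξ : ∀ i j b, ξ i (ξ j b) = ξ j (ξ i b))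
    (hη : ∀ i j b, η i (η j b) = η j (η i b)) (n : ℕ) (x y : B) :
    (n + 1) • bidiff ξ η (n + 1) x y = ∑ i, bidiff ξ η n (ξ i x) (η i y) := by
  have hsum : ∑ w : Fin (n + 1) → I, compDer ξ (n + 1) w x * compDer η (n + 1) w y
      = ∑ i, ∑ w : Fin n → I, compDer ξ n w (ξ i x) * compDer η n w (η i y) := by
    rw [← (Fin.consEquiv fun _ => I).sum_comp, Fintype.sum_prod_type]
    simp only [Fin.consEquiv, Equiv.coe_fn_mk, compDer_cons, map_compDer (hξ _),
      map_compDer (hη _)]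
  simp only [bidiff, hsum, ← smul_sum, ← Nat.cast_smul_eq_nsmul ℚ, smul_smul]
  congr 1
  push_cast [Nat.factorial_succ]
  field_simp

end Bidiff

namespace Derivation

variable {R A : Type*} [CommRing R] [CommRing A] [Algebra R A] (D : Derivation R A A)

noncomputable def mapPowerSeries : Derivation R A⟦X⟧ A⟦X⟧ :=
  Derivation.mk'
    { toFun := fun F => PowerSeries.mk fun n => D (coeff n F)
      map_add' := fun F G => by ext; simp
      map_smul' := fun r F => by ext; simp }
    fun F G => by
      ext n
      simp only [LinearMap.coe_mk, AddHom.coe_mk, smul_eq_mul, map_add, coeff_mk]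
      rw [mul_comm G, coeff_mul, coeff_mul, coeff_mul]
      simp [map_sum, D.leibniz, sum_add_distrib, mul_comm]

@[simp] lemma coeff_mapPowerSeries (n : ℕ) (F : A⟦X⟧) :
    coeff n (D.mapPowerSeries F) = D (coeff n F) := by
  simp [mapPowerSeries]

lemma mapPowerSeries_comm {D' : Derivation R A A} (h : ∀ a, D (D' a) = D' (D a)) (F : A⟦X⟧) :
    D.mapPowerSeries (D'.mapPowerSeries F) = D'.mapPowerSeries (D.mapPowerSeries F) := by
  ext n; simp [h]

lemma derivative_mapPowerSeries (F : A⟦X⟧) :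
    d⁄dX A (D.mapPowerSeries F) = D.mapPowerSeries (d⁄dX A F) := by
  ext n
  simp [coeff_derivative, D.leibniz, mul_comm]

end Derivation

namespace PowerSeries

variable {A : Type*} [CommRing A]

noncomputable def sumXPowMul : (ℕ → A⟦X⟧) →+ A⟦X⟧ where
  toFun Φ := mk fun N => ∑ p ∈ antidiagonal N, coeff p.1 (Φ p.2)
  map_zero' := by ext; simp
  map_add' Φ Ψ := by ext; simp [sum_add_distrib]

lemma coeff_sumXPowMul (Φ : ℕ → A⟦X⟧) (N : ℕ) :
    coeff N (sumXPowMul Φ) = ∑ p ∈ antidiagonal N, coeff p.1 (Φ p.2) := by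
  simp [sumXPowMul]

lemma constantCoeff_sumXPowMul (Φ : ℕ → A⟦X⟧) :
    constantCoeff (sumXPowMul Φ) = constantCoeff (Φ 0) := by
  simp only [← coeff_zero_eq_constantCoeff_apply, coeff_sumXPowMul, Nat.antidiagonal_zero,
    sum_singleton]

lemma mapPowerSeries_sumXPowMul {R : Type*} [CommRing R] [Algebra R A] (D : Derivation R A A)
    (Φ : ℕ → A⟦X⟧) :
    D.mapPowerSeries (sumXPowMul Φ) = sumXPowMul fun n => D.mapPowerSeries (Φ n) := by
  ext N; simp [coeff_sumXPowMul]

lemma derivative_sumXPowMul (Φ : ℕ → A⟦X⟧) :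
    d⁄dX A (sumXPowMul Φ) =
      sumXPowMul (fun n => d⁄dX A (Φ n)) + sumXPowMul fun n => (n + 1) • Φ (n + 1) := by
  ext N
  -- the weight `N + 1 = m + n` splits into the derivative of `Φ n` and that of `Xⁿ`
  have hsplit : ∀ p ∈ antidiagonal (N + 1), coeff p.1 (Φ p.2) * (N + 1 : A) =
      coeff p.1 (Φ p.2) * p.1 + coeff p.1 (Φ p.2) * p.2 := fun p hp => by
    rw [← mul_add]; norm_cast; rw [mem_antidiagonal.mp hp]
  rw [coeff_derivative, coeff_sumXPowMul, sum_mul, sum_congr rfl hsplit, sum_add_distrib,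
    Nat.sum_antidiagonal_succ, Nat.sum_antidiagonal_succ', map_add, coeff_sumXPowMul,
    coeff_sumXPowMul]
  simp only [map_nsmul]
  simp [coeff_derivative, nsmul_eq_mul, mul_comm]

lemma sumXPowMul_add (Φ Ψ : ℕ → A⟦X⟧) :
    sumXPowMul (fun n => Φ n + Ψ n) = sumXPowMul Φ + sumXPowMul Ψ :=
  map_add sumXPowMul Φ Ψ

lemma sumXPowMul_sum {ι : Type*} (s : Finset ι) (Φ : ι → ℕ → A⟦X⟧) :
    sumXPowMul (fun n => ∑ i ∈ s, Φ i n) = ∑ i ∈ s, sumXPowMul (Φ i) := by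
  rw [← map_sum, sum_fn]

lemma eq_zero_of_derivative_mem_closure [Algebra ℚ A] {ι : Type*} (f : ι → A⟦X⟧)
    (h0 : ∀ i, constantCoeff (f i) = 0)
    (hd : ∀ i, d⁄dX A (f i) ∈ AddSubgroup.closure (Set.range f)) (i : ι) : f i = 0 := by
  set S := AddSubgroup.closure (Set.range f)
  have hS0 : S ≤ (constantCoeff (R := A)).toAddMonoidHom.ker :=
    (AddSubgroup.closure_le _).mpr (Set.range_subset_iff.mpr h0)
  have hSd : S ≤ S.comap (d⁄dX A).toLinearMap.toAddMonoidHom :=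
    (AddSubgroup.closure_le _).mpr (Set.range_subset_iff.mpr hd)
  suffices h : ∀ N, ∀ F ∈ S, coeff N F = 0 from
    ext fun N => h N _ (AddSubgroup.subset_closure ⟨i, rfl⟩)
  intro N
  induction N with
  | zero => exact fun F hF => by simpa using hS0 hF
  | succ N ih =>
    intro F hF
    have hunit : IsUnit ((N : A) + 1) := by
      simpa using
        (isUnit_iff_ne_zero.mpr (by positivity : (N : ℚ) + 1 ≠ 0)).map (algebraMap ℚ A)
    have h : coeff N (d⁄dX A F) = 0 := ih _ (hSd hF)
    rw [coeff_derivative] at h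
    exact hunit.mul_left_eq_zero.mp h

end PowerSeries

lemma coeff_compDer_mapPowerSeries {R A I : Type*} [CommRing R] [CommRing A] [Algebra R A]
    (ξ : I → Derivation R A A) (n k : ℕ) (w : Fin k → I) (F : A⟦X⟧) :
    coeff n (compDer (fun i => (ξ i).mapPowerSeries) k w F) = compDer ξ k w (coeff n F) :=
  map_compDer (fun i => (ξ i).coeff_mapPowerSeries n) k w F

section ExpProd

variable {R A I : Type*} [CommRing R] [CommRing A] [Algebra R A] [Algebra ℚ A] [Fintype I]
variable (ξ η : I → Derivation R A A)

lemma expProd_eq_sumXPowMul (F G : A⟦X⟧) :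
    expProd ξ η F G = sumXPowMul fun n =>
      bidiff (fun i => (ξ i).mapPowerSeries) (fun i => (η i).mapPowerSeries) n F G := by
  ext N
  rw [coeff_sumXPowMul]
  simp only [expProd, coeff_mk]
  refine sum_congr rfl fun p _ => ?_
  simp only [bidiff, coeff_smul, map_sum, coeff_mul, coeff_compDer_mapPowerSeries]
  rw [sum_comm, smul_sum]

lemma constantCoeff_expProd (F G : A⟦X⟧) :
    constantCoeff (expProd ξ η F G) = constantCoeff F * constantCoeff G := by
  rw [expProd_eq_sumXPowMul, constantCoeff_sumXPowMul, bidiff_zero, map_mul]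

lemma expProd_add_left (F F' G : A⟦X⟧) :
    expProd ξ η (F + F') G = expProd ξ η F G + expProd ξ η F' G := by
  simp only [expProd_eq_sumXPowMul, bidiff_add_left, sumXPowMul_add]

lemma expProd_add_right (F G G' : A⟦X⟧) :
    expProd ξ η F (G + G') = expProd ξ η F G + expProd ξ η F G' := by
  simp only [expProd_eq_sumXPowMul, bidiff_add_right, sumXPowMul_add]

lemma expProd_sum_left {ι : Type*} (s : Finset ι) (F : ι → A⟦X⟧) (G : A⟦X⟧) :
    expProd ξ η (∑ i ∈ s, F i) G = ∑ i ∈ s, expProd ξ η (F i) G :=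
  map_sum (AddMonoidHom.mk' (expProd ξ η · G) fun F F' => expProd_add_left ξ η F F' G) F s

lemma expProd_sum_right {ι : Type*} (s : Finset ι) (F : A⟦X⟧) (G : ι → A⟦X⟧) :
    expProd ξ η F (∑ i ∈ s, G i) = ∑ i ∈ s, expProd ξ η F (G i) :=
  map_sum (AddMonoidHom.mk' (expProd ξ η F) (expProd_add_right ξ η F)) G s

lemma expProd_zero_left (G : A⟦X⟧) : expProd ξ η 0 G = 0 :=
  map_zero (AddMonoidHom.mk' (expProd ξ η · G) fun F F' => expProd_add_left ξ η F F' G)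

lemma expProd_zero_right (F : A⟦X⟧) : expProd ξ η F 0 = 0 :=
  map_zero (AddMonoidHom.mk' (expProd ξ η F) (expProd_add_right ξ η F))

lemma leibniz_expProd (D : Derivation R A A) (hξ : ∀ i a, D (ξ i a) = ξ i (D a))
    (hη : ∀ i a, D (η i a) = η i (D a)) (F G : A⟦X⟧) :
    D.mapPowerSeries (expProd ξ η F G) =
      expProd ξ η (D.mapPowerSeries F) G + expProd ξ η F (D.mapPowerSeries G) := by
  simp only [expProd_eq_sumXPowMul, mapPowerSeries_sumXPowMul,
    leibniz_bidiff _ _ D.mapPowerSeries (fun i => D.mapPowerSeries_comm (hξ i))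
      (fun i => D.mapPowerSeries_comm (hη i)), sumXPowMul_add]

lemma derivative_expProd (hξ : ∀ i j a, ξ i (ξ j a) = ξ j (ξ i a))
    (hη : ∀ i j a, η i (η j a) = η j (η i a)) (F G : A⟦X⟧) :
    d⁄dX A (expProd ξ η F G) = expProd ξ η (d⁄dX A F) G + expProd ξ η F (d⁄dX A G) +
      ∑ i, expProd ξ η ((ξ i).mapPowerSeries F) ((η i).mapPowerSeries G) := by
  simp only [expProd_eq_sumXPowMul, derivative_sumXPowMul,
    leibniz_bidiff _ _ (d⁄dX A) (fun i => (ξ i).derivative_mapPowerSeries)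
      (fun i => (η i).derivative_mapPowerSeries),
    succ_smul_bidiff_succ _ _ (fun i j => (ξ i).mapPowerSeries_comm (hξ i j))
      (fun i j => (η i).mapPowerSeries_comm (hη i j)),
    sumXPowMul_add, sumXPowMul_sum]

end ExpProd

section Associativity

variable {R A I : Type*} [CommRing R] [CommRing A] [Algebra R A] [Algebra ℚ A] [Fintype I]
variable (ξ η : I → Derivation R A A)

noncomputable def expProdAssociator (F G H : A⟦X⟧) : A⟦X⟧ :=
  expProd ξ η (expProd ξ η F G) H - expProd ξ η F (expProd ξ η G H)

lemma constantCoeff_expProdAssociator (F G H : A⟦X⟧) :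
    constantCoeff (expProdAssociator ξ η F G H) = 0 := by
  simp only [expProdAssociator, map_sub, constantCoeff_expProd, mul_assoc, sub_self]

lemma derivative_expProdAssociator (hξξ : ∀ i j a, ξ i (ξ j a) = ξ j (ξ i a))
    (hξη : ∀ i j a, ξ i (η j a) = η j (ξ i a)) (hηη : ∀ i j a, η i (η j a) = η j (η i a))
    (F G H : A⟦X⟧) :
    d⁄dX A (expProdAssociator ξ η F G H) =
      expProdAssociator ξ η (d⁄dX A F) G H + expProdAssociator ξ η F (d⁄dX A G) H +
        expProdAssociator ξ η F G (d⁄dX A H) +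
        ∑ i, (expProdAssociator ξ η ((ξ i).mapPowerSeries F) ((η i).mapPowerSeries G) H +
          expProdAssociator ξ η ((ξ i).mapPowerSeries F) G ((η i).mapPowerSeries H) +
          expProdAssociator ξ η F ((ξ i).mapPowerSeries G) ((η i).mapPowerSeries H)) := by
  have hξ : ∀ i F G, (ξ i).mapPowerSeries (expProd ξ η F G) =
      expProd ξ η ((ξ i).mapPowerSeries F) G + expProd ξ η F ((ξ i).mapPowerSeries G) :=
    fun i => leibniz_expProd ξ η (ξ i) (hξξ i) (hξη i)
  have hη : ∀ i F G, (η i).mapPowerSeries (expProd ξ η F G) =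
      expProd ξ η ((η i).mapPowerSeries F) G + expProd ξ η F ((η i).mapPowerSeries G) :=
    fun i => leibniz_expProd ξ η (η i) (fun j a => (hξη j i a).symm) (hηη i)
  simp only [expProdAssociator, map_sub, derivative_expProd ξ η hξξ hηη, hξ, hη,
    expProd_add_left, expProd_add_right, expProd_sum_left, expProd_sum_right,
    sum_add_distrib, sum_sub_distrib]
  abel

end Associativity

theorem exponential_product_associative_general
    {R A I : Type*} [CommRing R] [CommRing A] [Algebra R A] [Algebra ℚ A]
    [Fintype I]
    (ξ η : I → Derivation R A A)
    (hξξ : ∀ i j : I, ∀ a : A, ξ i (ξ j a) = ξ j (ξ i a))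
    (hξη : ∀ i j : I, ∀ a : A, ξ i (η j a) = η j (ξ i a))
    (hηη : ∀ i j : I, ∀ a : A, η i (η j a) = η j (η i a)) :
    (∀ F G H : PowerSeries A,
        expProd ξ η (expProd ξ η F G) H = expProd ξ η F (expProd ξ η G H)) ∧
    (∀ F : PowerSeries A, expProd ξ η 1 F = F) ∧
    (∀ F : PowerSeries A, expProd ξ η F 1 = F) := by
  refine ⟨fun F G H => ?_, fun F => ?_, fun F => ?_⟩
  · let assoc (x : A⟦X⟧ × A⟦X⟧ × A⟦X⟧) := expProdAssociator ξ η x.1 x.2.1 x.2.2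
    have hmem : ∀ F G H, expProdAssociator ξ η F G H ∈ AddSubgroup.closure (Set.range assoc) :=
      fun F G H => AddSubgroup.subset_closure ⟨(F, G, H), rfl⟩
    refine sub_eq_zero.mp (eq_zero_of_derivative_mem_closure assoc
      (fun x => constantCoeff_expProdAssociator ξ η _ _ _) (fun x => ?_) (F, G, H))
    rw [derivative_expProdAssociator ξ η hξξ hξη hηη]
    exact add_mem (add_mem (add_mem (hmem _ _ _) (hmem _ _ _)) (hmem _ _ _)) <|
      sum_mem fun i _ => add_mem (add_mem (hmem _ _ _) (hmem _ _ _)) (hmem _ _ _)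
  · refine sub_eq_zero.mp <| eq_zero_of_derivative_mem_closure (fun F => expProd ξ η 1 F - F)
      (fun F => by simp [constantCoeff_expProd])
      (fun F => AddSubgroup.subset_closure ⟨d⁄dX A F, ?_⟩) F
    simp [derivative_expProd ξ η hξξ hηη, expProd_zero_left]
  · refine sub_eq_zero.mp <| eq_zero_of_derivative_mem_closure (fun F => expProd ξ η F 1 - F)
      (fun F => by simp [constantCoeff_expProd])
      (fun F => AddSubgroup.subset_closure ⟨d⁄dX A F, ?_⟩) F
    simp [derivative_expProd ξ η hξξ hηη, expProd_zero_right]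

/-- if all the derivations `ξ i`, `η j` pairwise commute, then the exponential
product on `A[[ħ]]` is associative, and `(A[[ħ]], ⋆)` is an associative unital algebra with
unit `1`. -/
theorem exponential_product_associative
    {R A I : Type*} [CommRing R] [Algebra ℚ R] [CommRing A] [Algebra R A] [Algebra ℚ A]
    [IsScalarTower ℚ R A] [Fintype I]
    (ξ η : I → Derivation R A A)
    (hξξ : ∀ i j : I, ∀ a : A, ξ i (ξ j a) = ξ j (ξ i a))
    (hξη : ∀ i j : I, ∀ a : A, ξ i (η j a) = η j (ξ i a))
    (hηη : ∀ i j : I, ∀ a : A, η i (η j a) = η j (η i a)) :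
    (∀ F G H : PowerSeries A,
        expProd ξ η (expProd ξ η F G) H = expProd ξ η F (expProd ξ η G H)) ∧
    (∀ F : PowerSeries A, expProd ξ η 1 F = F) ∧
    (∀ F : PowerSeries A, expProd ξ η F 1 = F) :=
  exponential_product_associative_general ξ η hξξ hξη hηη
end

section
/- Let k be a commutative ring, λ ∈ k, and 𝔈, 𝔉 k-modules. Let P₀, v : 𝔈 → 𝔉 and Δ₀^R, Δ₀^A, Δ^R : 𝔉 → 𝔈 be k-linear maps such that P₀∘Δ₀^R = id_𝔉, (P₀ + λv)∘Δ^R = id_𝔉, and range(Δ^R) ⊆ range(Δ₀^R). Set ρ := id_𝔈 + λ·(Δ₀^R∘v) and ρ^T := id_𝔉 + λ·(v∘Δ₀^A). Then ρ∘Δ^R = Δ₀^R, and consequently ρ∘Δ^R∘ρ^T = Δ₀^R + λ·(Δ₀^R∘v∘Δ₀^A). (This is the paper's Lemma on the derivative of the inverse Møller map: ρ∘Δ^R_S(φ)∘ρ^T = Δ^R_{S₀} + λ Δ^R_{S₀} V^{(2)}(φ) Δ^A_{S₀}.) -/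
/-- with `ρ = id + λ·(Δ₀^R∘v)` and `ρ^T = id + λ·(v∘Δ₀^A)`, one has
`ρ∘Δ^R = Δ₀^R`, and consequently `ρ∘Δ^R∘ρ^T = Δ₀^R + λ·(Δ₀^R∘v∘Δ₀^A)`. -/
theorem moller_derivative_propagator
    {k E F : Type*} [CommRing k] [AddCommGroup E] [AddCommGroup F] [Module k E] [Module k F]
    (lam : k) (P₀ v : E →ₗ[k] F) (Δ₀R Δ₀A ΔR : F →ₗ[k] E)
    (h0R : P₀ ∘ₗ Δ₀R = LinearMap.id)
    (hR : (P₀ + lam • v) ∘ₗ ΔR = LinearMap.id)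
    (hran : LinearMap.range ΔR ≤ LinearMap.range Δ₀R) :
    (LinearMap.id + lam • (Δ₀R ∘ₗ v)) ∘ₗ ΔR = Δ₀R ∧
    ((LinearMap.id + lam • (Δ₀R ∘ₗ v)) ∘ₗ ΔR) ∘ₗ (LinearMap.id + lam • (v ∘ₗ Δ₀A)) =
      Δ₀R + lam • ((Δ₀R ∘ₗ v) ∘ₗ Δ₀A) := by
  have key : (LinearMap.id + lam • (Δ₀R ∘ₗ v)) ∘ₗ ΔR = Δ₀R := by
    ext y
    obtain ⟨z, hz⟩ := hran (LinearMap.mem_range_self ΔR y)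
    have h1 : P₀ (ΔR y) + lam • v (ΔR y) = y := by
      have := congrArg (fun f => f y) hR
      simpa using this
    have h2 : Δ₀R (P₀ (ΔR y)) = ΔR y := by
      rw [← hz]
      have := congrArg (fun f => f z) h0R
      simp only [LinearMap.comp_apply, LinearMap.id_apply] at this
      rw [this]
    have h3 := congrArg Δ₀R h1
    simp only [map_add, map_smul, h2] at h3
    simpa [LinearMap.comp_apply, LinearMap.add_apply, LinearMap.smul_apply] using h3
  refine ⟨key, ?_⟩
  rw [key]
  ext y
  simp [LinearMap.comp_apply, LinearMap.add_apply, LinearMap.smul_apply]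
end

section
/- Let k be a commutative ring, λ ∈ k, and 𝔈, 𝔉 k-modules equipped with a k-bilinear pairing ⟨·,·⟩ : 𝔉 × 𝔈 → k that separates points of 𝔈 (if ⟨f, φ⟩ = 0 for all f ∈ 𝔉 then φ = 0). Let P₀, v : 𝔈 → 𝔉 and Δ₀^R, Δ₀^A, Δ^R, Δ^A : 𝔉 → 𝔈 be k-linear maps satisfying: P₀∘Δ₀^R = P₀∘Δ₀^A = id_𝔉; (P₀+λv)∘Δ^R = (P₀+λv)∘Δ^A = id_𝔉; range(Δ^R) ⊆ range(Δ₀^R) and range(Δ^A) ⊆ range(Δ₀^A); the adjointness relations ⟨f, Δ₀^R g⟩ = ⟨g, Δ₀^A f⟩ and ⟨f, Δ^R g⟩ = ⟨g, Δ^A f⟩ for all f, g ∈ 𝔉; and the symmetry ⟨v(φ), ψ⟩ = ⟨v(ψ), φ⟩ for all φ, ψ ∈ 𝔈. Set ρ := id_𝔈 + λ·(Δ₀^R∘v) and ρ^T := id_𝔉 + λ·(v∘Δ₀^A). Then ρ∘(Δ^R − Δ^A)∘ρ^T = Δ₀^R − Δ₀^A. (This is the algebraic core of the paper's Proposition that the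 retarded Møller operator intertwines the interacting and free Peierls brackets: ρ∘Δ_S∘ρ^T = Δ_{S₀}.) -/
/-- with `ρ = id + λ·(Δ₀^R∘v)` and `ρ^T = id + λ·(v∘Δ₀^A)`, one has
`ρ∘(Δ^R − Δ^A)∘ρ^T = Δ₀^R − Δ₀^A`, i.e. the derivative of the inverse Møller map intertwines
the interacting and free causal propagators. -/
theorem moller_intertwines_causal_propagators
    {k E F : Type*} [CommRing k] [AddCommGroup E] [AddCommGroup F] [Module k E] [Module k F]
    (lam : k) (B : F →ₗ[k] E →ₗ[k] k)
    (hsep : ∀ φ : E, (∀ f : F, B f φ = 0) → φ = 0)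
    (P₀ v : E →ₗ[k] F) (Δ₀R Δ₀A ΔR ΔA : F →ₗ[k] E)
    (h0R : P₀ ∘ₗ Δ₀R = LinearMap.id)
    (h0A : P₀ ∘ₗ Δ₀A = LinearMap.id)
    (hR : (P₀ + lam • v) ∘ₗ ΔR = LinearMap.id)
    (hA : (P₀ + lam • v) ∘ₗ ΔA = LinearMap.id)
    (hranR : LinearMap.range ΔR ≤ LinearMap.range Δ₀R)
    (hranA : LinearMap.range ΔA ≤ LinearMap.range Δ₀A)
    (hadj0 : ∀ f g : F, B f (Δ₀R g) = B g (Δ₀A f))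
    (hadj : ∀ f g : F, B f (ΔR g) = B g (ΔA f))
    (hsym : ∀ φ ψ : E, B (v φ) ψ = B (v ψ) φ) :
    ((LinearMap.id + lam • (Δ₀R ∘ₗ v)) ∘ₗ (ΔR - ΔA)) ∘ₗ (LinearMap.id + lam • (v ∘ₗ Δ₀A)) =
      Δ₀R - Δ₀A := by
  -- key1: ρ ∘ ΔR = Δ₀R pointwise
  have key1 : ∀ f : F, ΔR f + lam • Δ₀R (v (ΔR f)) = Δ₀R f := by
    intro f
    obtain ⟨g, hg⟩ := hranR ⟨f, rfl⟩
    have hPg : P₀ (Δ₀R g) = g := LinearMap.ext_iff.mp h0R g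
    have hRf : P₀ (ΔR f) + lam • v (ΔR f) = f := by
      have := LinearMap.ext_iff.mp hR f
      simpa using this
    have h1 : Δ₀R (P₀ (ΔR f)) = ΔR f := by rw [← hg, hPg]
    calc ΔR f + lam • Δ₀R (v (ΔR f))
        = Δ₀R (P₀ (ΔR f)) + Δ₀R (lam • v (ΔR f)) := by rw [h1, map_smul]
      _ = Δ₀R (P₀ (ΔR f) + lam • v (ΔR f)) := by rw [map_add]
      _ = Δ₀R f := by rw [hRf]
  -- key2: ΔA ∘ ρᵀ = Δ₀A pointwise, via the separating pairing
  have key2 : ∀ g : F, ΔA (g + lam • v (Δ₀A g)) = Δ₀A g := by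
    intro g
    have hz : ∀ f : F, B f (ΔA (g + lam • v (Δ₀A g)) - Δ₀A g) = 0 := by
      intro f
      have h1 : B f (ΔA (g + lam • v (Δ₀A g))) = B (g + lam • v (Δ₀A g)) (ΔR f) :=
        (hadj (g + lam • v (Δ₀A g)) f).symm
      have h2 : B (g + lam • v (Δ₀A g)) (ΔR f)
          = B g (ΔR f) + lam • B (v (ΔR f)) (Δ₀A g) := by
        simp [map_add, map_smul, hsym (Δ₀A g) (ΔR f)]
      have h3 : B (v (ΔR f)) (Δ₀A g) = B g (Δ₀R (v (ΔR f))) :=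
        (hadj0 g (v (ΔR f))).symm
      have h4 : B g (ΔR f) + lam • B g (Δ₀R (v (ΔR f))) = B g (Δ₀R f) := by
        rw [← key1 f]
        simp [map_add, map_smul]
      have h5 : B g (Δ₀R f) = B f (Δ₀A g) := hadj0 g f
      rw [map_sub, h1, h2, h3, h4, h5, sub_self]
    have := hsep _ hz
    exact sub_eq_zero.mp this
  ext g
  simp only [LinearMap.comp_apply, LinearMap.add_apply, LinearMap.smul_apply,
    LinearMap.id_apply, LinearMap.sub_apply]
  set h := g + lam • v (Δ₀A g) with hh
  rw [key2 g]
  have e1 : Δ₀R (v (ΔR h - Δ₀A g)) = Δ₀R (v (ΔR h)) - Δ₀R (v (Δ₀A g)) := by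
    simp [map_sub]
  have hA' : lam • Δ₀R (v (ΔR h)) = Δ₀R h - ΔR h := by rw [← key1 h]; abel
  have hh2 : Δ₀R h = Δ₀R g + lam • Δ₀R (v (Δ₀A g)) := by
    rw [hh]; simp [map_add, map_smul]
  rw [e1, smul_sub, hA', hh2]
  abel
end

section
/- Let k be a commutative ring, λ ∈ k, and 𝔈, 𝔉 k-modules equipped with a k-bilinear pairing ⟨·,·⟩ : 𝔉 × 𝔈 → k that separates points of 𝔈. Let P₀, v : 𝔈 → 𝔉 and Δ₀^R, Δ₀^A, Δ^R, Δ^A : 𝔉 → 𝔈 be k-linear maps satisfying: P₀∘Δ₀^R = P₀∘Δ₀^A = id_𝔉; (P₀+λv)∘Δ^R = (P₀+λv)∘Δ^A = id_𝔉; range(Δ^R) ⊆ range(Δ₀^R) and range(Δ^A) ⊆ range(Δ₀^A); ⟨f, Δ₀^R g⟩ = ⟨g, Δ₀^A f⟩ and ⟨f, Δ^R g⟩ = ⟨g, Δ^A f⟩ for all f, g ∈ 𝔉; and ⟨v(φ), ψ⟩ = ⟨v(ψ), φ⟩ for all φ, ψ ∈ 𝔈. Set ρ := id_𝔈 + λ·(Δ₀^R∘v)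 and ρ^T := id_𝔉 + λ·(v∘Δ₀^A). Then ρ∘Δ^A∘ρ^T = Δ₀^A + λ·(Δ₀^R∘v∘Δ₀^A), and consequently ρ∘(Δ^R + Δ^A)∘ρ^T = Δ₀^R + Δ₀^A + 2λ·(Δ₀^R∘v∘Δ₀^A). (This is the key identity ρ∘Δ^D_S∘ρ^T = Δ^D_{S₀} − iλδ in the paper's proof of the perturbative agreement theorem for quadratic interactions.) -/
/-- with `ρ = id + λ·(Δ₀^R∘v)` and `ρ^T = id + λ·(v∘Δ₀^A)`, one has
`ρ∘Δ^A∘ρ^T = Δ₀^A + λ·(Δ₀^R∘v∘Δ₀^A)`, and consequently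
`ρ∘(Δ^R + Δ^A)∘ρ^T = Δ₀^R + Δ₀^A + 2λ·(Δ₀^R∘v∘Δ₀^A)`. -/
theorem moller_dirac_propagator
    {k E F : Type*} [CommRing k] [AddCommGroup E] [AddCommGroup F] [Module k E] [Module k F]
    (lam : k) (B : F →ₗ[k] E →ₗ[k] k)
    (hsep : ∀ φ : E, (∀ f : F, B f φ = 0) → φ = 0)
    (P₀ v : E →ₗ[k] F) (Δ₀R Δ₀A ΔR ΔA : F →ₗ[k] E)
    (h0R : P₀ ∘ₗ Δ₀R = LinearMap.id)
    (h0A : P₀ ∘ₗ Δ₀A = LinearMap.id)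
    (hR : (P₀ + lam • v) ∘ₗ ΔR = LinearMap.id)
    (hA : (P₀ + lam • v) ∘ₗ ΔA = LinearMap.id)
    (hranR : LinearMap.range ΔR ≤ LinearMap.range Δ₀R)
    (hranA : LinearMap.range ΔA ≤ LinearMap.range Δ₀A)
    (hadj0 : ∀ f g : F, B f (Δ₀R g) = B g (Δ₀A f))
    (hadj : ∀ f g : F, B f (ΔR g) = B g (ΔA f))
    (hsym : ∀ φ ψ : E, B (v φ) ψ = B (v ψ) φ) :
    ((LinearMap.id + lam • (Δ₀R ∘ₗ v)) ∘ₗ ΔA) ∘ₗ (LinearMap.id + lam • (v ∘ₗ Δ₀A)) =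
      Δ₀A + lam • ((Δ₀R ∘ₗ v) ∘ₗ Δ₀A) ∧
    ((LinearMap.id + lam • (Δ₀R ∘ₗ v)) ∘ₗ (ΔR + ΔA)) ∘ₗ (LinearMap.id + lam • (v ∘ₗ Δ₀A)) =
      Δ₀R + Δ₀A + (2 * lam) • ((Δ₀R ∘ₗ v) ∘ₗ Δ₀A) := by
  -- L1 : Δ₀R f = ΔR f + lam • Δ₀R (v (ΔR f))
  have L1 : ∀ f : F, Δ₀R f = ΔR f + lam • Δ₀R (v (ΔR f)) := by
    intro f
    obtain ⟨g, hg⟩ := hranR ⟨f, rfl⟩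
    have hTran : Δ₀R f - ΔR f - lam • Δ₀R (v (ΔR f)) = Δ₀R (f - g - lam • v (ΔR f)) := by
      simp [map_sub, map_smul, hg]
    have hP : P₀ (Δ₀R f - ΔR f - lam • Δ₀R (v (ΔR f))) = 0 := by
      have h1 : P₀ (Δ₀R f) = f := congrArg (· f) h0R
      have h2 : P₀ (ΔR f) + lam • v (ΔR f) = f := by
        have := congrArg (· f) hR
        simpa using this
      have h3 : P₀ (Δ₀R (v (ΔR f))) = v (ΔR f) := congrArg (· (v (ΔR f))) h0R
      simp only [map_sub, map_smul, h1, h3]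
      rw [sub_sub]
      exact sub_eq_zero.mpr h2.symm
    have hz : f - g - lam • v (ΔR f) = 0 := by
      have := congrArg (· (f - g - lam • v (ΔR f))) h0R
      simp only [LinearMap.comp_apply, LinearMap.id_apply] at this
      rw [← this, ← hTran, hP]
    have h0 : Δ₀R f - ΔR f - lam • Δ₀R (v (ΔR f)) = 0 := by
      rw [hTran, hz, map_zero]
    have h0' : Δ₀R f - (ΔR f + lam • Δ₀R (v (ΔR f))) = 0 := by
      rw [← h0]; abel
    exact sub_eq_zero.mp h0'
  -- L2 : Δ₀A f = ΔA f + lam • ΔA (v (Δ₀A f))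
  have L2 : ∀ f : F, Δ₀A f = ΔA f + lam • ΔA (v (Δ₀A f)) := by
    intro f
    have key : ∀ g : F, B g (Δ₀A f - (ΔA f + lam • ΔA (v (Δ₀A f)))) = 0 := by
      intro g
      have e1 : B g (Δ₀A f) = B f (Δ₀R g) := (hadj0 f g).symm
      have e2 : B g (ΔA f) = B f (ΔR g) := (hadj f g).symm
      have e3 : B g (ΔA (v (Δ₀A f))) = B (v (Δ₀A f)) (ΔR g) := (hadj (v (Δ₀A f)) g).symm
      have e4 : B (v (Δ₀A f)) (ΔR g) = B (v (ΔR g)) (Δ₀A f) := hsym _ _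
      have e5 : B (v (ΔR g)) (Δ₀A f) = B f (Δ₀R (v (ΔR g))) := (hadj0 f (v (ΔR g))).symm
      have e6 : B f (Δ₀R g) = B f (ΔR g) + lam • B f (Δ₀R (v (ΔR g))) := by
        rw [L1 g]; simp [map_add, map_smul]
      simp only [map_sub, map_add, map_smul, e1, e2, e3]
      rw [e4, e5, e6]
      simp only [smul_eq_mul]
      ring
    exact sub_eq_zero.mp (hsep _ key)
  have L2' : ΔA ∘ₗ (LinearMap.id + lam • (v ∘ₗ Δ₀A)) = Δ₀A := by
    ext f
    simp only [LinearMap.comp_apply, LinearMap.add_apply, LinearMap.smul_apply,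
      LinearMap.id_apply, map_add, map_smul]
    conv_rhs => rw [L2 f]
  have L1' : (LinearMap.id + lam • (Δ₀R ∘ₗ v)) ∘ₗ ΔR = Δ₀R := by
    ext f
    simp only [LinearMap.comp_apply, LinearMap.add_apply, LinearMap.smul_apply,
      LinearMap.id_apply]
    rw [L1 f]
  have part1 : ((LinearMap.id + lam • (Δ₀R ∘ₗ v)) ∘ₗ ΔA) ∘ₗ
      (LinearMap.id + lam • (v ∘ₗ Δ₀A)) = Δ₀A + lam • ((Δ₀R ∘ₗ v) ∘ₗ Δ₀A) := by
    rw [LinearMap.comp_assoc, L2']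
    ext f
    simp [map_add, map_smul]
  refine ⟨part1, ?_⟩
  have expand : ((LinearMap.id + lam • (Δ₀R ∘ₗ v)) ∘ₗ (ΔR + ΔA)) ∘ₗ
      (LinearMap.id + lam • (v ∘ₗ Δ₀A)) =
        ((LinearMap.id + lam • (Δ₀R ∘ₗ v)) ∘ₗ ΔR) ∘ₗ (LinearMap.id + lam • (v ∘ₗ Δ₀A)) +
      ((LinearMap.id + lam • (Δ₀R ∘ₗ v)) ∘ₗ ΔA) ∘ₗ (LinearMap.id + lam • (v ∘ₗ Δ₀A)) := by
    ext f
    simp only [LinearMap.comp_apply, LinearMap.add_apply, LinearMap.smul_apply,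
      LinearMap.id_apply, map_add, map_smul, smul_add, smul_smul]
    abel
  rw [expand, L1', part1]
  ext f
  simp only [LinearMap.comp_apply, LinearMap.add_apply, LinearMap.smul_apply,
    LinearMap.id_apply, map_add, map_smul, smul_add, smul_smul, two_mul, add_smul]
  abel
end

section
/- Let α ∈ 𝒢(n), γ ∈ 𝒢(m), let j be a labelled vertex of γ, let β ∈ 𝒢(n+m−1), and let E be the set of extensions (u, v) of γ by α at j with middle graph exactly β. Then: (i) the group Aut(β) acts freely on E by θ·(u, v) := (θ∘u, v∘θ⁻¹), and its orbits are precisely the equivalence classes of extensions; (ii) for each subgraph S ⊆ β, the group Aut(α) × Aut(γ) acts freely and transitively on the (possibly empty) set of extensions (u, v) ∈ E with u(α) = S, via (a, c)·(u, v) := (u∘a⁻¹, c∘v). Consequently the number of extensions in E with a fixed image subgraph S is either 0 or |Aut(α)|·|Aut(γ)|. (Counting core of the paper's Lemma on partial composition.) -/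
attribute [local instance] Classical.propDecidable

/-- A finite directed multigraph with `n` labelled vertices (the elements of `Fin n`)
and a finite set `V` of unlabelled vertices. -/
structure PreGraph (n : ℕ) where
  V : Type
  E : Type
  finV : Finite V
  finE : Finite E
  src : E → Fin n ⊕ V
  tgt : E → Fin n ⊕ V

attribute [instance] PreGraph.finV PreGraph.finE

namespace PreGraph

/-- `γ ∈ 𝒢(n)`: every unlabelled vertex has valency ≥ 1. -/
def IsGraph {n : ℕ} (γ : PreGraph n) : Prop :=
  ∀ v : γ.V, ∃ e : γ.E, γ.src e = Sum.inr v ∨ γ.tgt e = Sum.inr v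

/-- The two endpoints of "an edge or a vertex" (a vertex counting as a degenerate edge). -/
def ends {m : ℕ} (β : PreGraph m) : β.E ⊕ (Fin m ⊕ β.V) → (Fin m ⊕ β.V) × (Fin m ⊕ β.V)
  | Sum.inl e => (β.src e, β.tgt e)
  | Sum.inr x => (x, x)

end PreGraph

/-- A morphism of labelled graphs: vertices map to vertices, edges map to edges or collapse
to vertices, sources and targets are respected, and labelled vertices map to labelled
vertices preserving their order. -/
structure GMor {n m : ℕ} (α : PreGraph n) (β : PreGraph m) where
  onL : Fin n → Fin m
  monoL : Monotone onL
  onV : Fin n ⊕ α.V → Fin m ⊕ β.V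
  hL : ∀ i : Fin n, onV (Sum.inl i) = Sum.inl (onL i)
  onE : α.E → β.E ⊕ (Fin m ⊕ β.V)
  hE : ∀ e : α.E, β.ends (onE e) = (onV (α.src e), onV (α.tgt e))

namespace GMor

/-- Auxiliary: the action of a morphism on "edges or vertices". -/
def compE {m p : ℕ} {β : PreGraph m} {γ : PreGraph p} (g : GMor β γ) :
    β.E ⊕ (Fin m ⊕ β.V) → γ.E ⊕ (Fin p ⊕ γ.V)
  | Sum.inl e => g.onE e
  | Sum.inr x => Sum.inr (g.onV x)

theorem ends_compE {m p : ℕ} {β : PreGraph m} {γ : PreGraph p} (g : GMor β γ)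
    (x : β.E ⊕ (Fin m ⊕ β.V)) :
    γ.ends (g.compE x) = (g.onV (β.ends x).1, g.onV (β.ends x).2) := by
  cases x with
  | inl e => exact g.hE e
  | inr y => rfl

/-- Composition of graph morphisms. -/
def comp {n m p : ℕ} {α : PreGraph n} {β : PreGraph m} {γ : PreGraph p}
    (g : GMor β γ) (f : GMor α β) : GMor α γ where
  onL := g.onL ∘ f.onL
  monoL := g.monoL.comp f.monoL
  onV := g.onV ∘ f.onV
  hL := fun i => by simp only [Function.comp_apply, f.hL i, g.hL (f.onL i)]
  onE := fun e => g.compE (f.onE e)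
  hE := fun e => by rw [ends_compE, f.hE e]; rfl

end GMor

/-- An isomorphism of labelled graphs (fixing the labels pointwise). -/
structure GIso {n : ℕ} (α β : PreGraph n) where
  eV : α.V ≃ β.V
  eE : α.E ≃ β.E
  hsrc : ∀ e : α.E, β.src (eE e) = Sum.map id eV (α.src e)
  htgt : ∀ e : α.E, β.tgt (eE e) = Sum.map id eV (α.tgt e)

/-- An isomorphism, regarded as a morphism. -/
def GIso.toGMor {n : ℕ} {α β : PreGraph n} (θ : GIso α β) : GMor α β where
  onL := id
  monoL := monotone_id
  onV := Sum.map id θ.eV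
  hL := fun _ => rfl
  onE := fun e => Sum.inl (θ.eE e)
  hE := fun e => by simp only [PreGraph.ends, θ.hsrc e, θ.htgt e]

/-- The collapse map on labels: `qmap n j` sends the window `[j, j+n]` of `Fin (n+m+1)` to `j`
and is the order-preserving bijection elsewhere. -/
def qmap (n : ℕ) {m : ℕ} (j : Fin (m + 1)) (i : Fin (n + m + 1)) : Fin (m + 1) :=
  if h : i.val ≤ j.val then ⟨i.val, by have := j.isLt; omega⟩
  else if h2 : i.val ≤ j.val + n then j
  else ⟨i.val - n, by have := i.isLt; omega⟩

/-- `(u, v)` is an extension of `γ` by `α` at the labelled vertex `j`, with middle graph `β`: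
`u : α ↪ β` is injective, `v : β ↠ γ` is surjective, `u(α) = v⁻¹(j)`, and the restriction of
`v` to the complement of `u(α)` is injective. -/
structure IsExtension {n m : ℕ} {α : PreGraph (n + 1)} {β : PreGraph (n + m + 1)}
    {γ : PreGraph (m + 1)} (j : Fin (m + 1)) (u : GMor α β) (v : GMor β γ) : Prop where
  uLab : ∀ i : Fin (n + 1), (u.onL i).val = j.val + i.val
  vLab : ∀ i : Fin (n + m + 1), v.onL i = qmap n j i
  uVinj : Function.Injective u.onV
  uEedge : ∀ e : α.E, ∃ e' : β.E, u.onE e = Sum.inl e'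
  uEinj : Function.Injective u.onE
  vVsurj : Function.Surjective v.onV
  vEsurj : ∀ e' : γ.E, ∃ e : β.E, v.onE e = Sum.inl e'
  imV : Set.range u.onV = {x | v.onV x = Sum.inl j}
  imE : {e' : β.E | ∃ e : α.E, u.onE e = Sum.inl e'} =
    {e' : β.E | v.onE e' = Sum.inr (Sum.inl j)}
  compEedge : ∀ e' : β.E, (¬ ∃ e : α.E, u.onE e = Sum.inl e') →
    ∃ eγ : γ.E, v.onE e' = Sum.inl eγ
  compVinj : Set.InjOn v.onV {x | x ∉ Set.range u.onV}
  compEinj : Set.InjOn v.onE {e' : β.E | ¬ ∃ e : α.E, u.onE e = Sum.inl e'}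

/-- The inverse of a graph isomorphism. -/
def GIso.symm {n : ℕ} {α β : PreGraph n} (θ : GIso α β) : GIso β α where
  eV := θ.eV.symm
  eE := θ.eE.symm
  hsrc := fun e => by
    have h := θ.hsrc (θ.eE.symm e)
    rw [θ.eE.apply_symm_apply] at h
    rw [h]
    cases α.src (θ.eE.symm e) <;> simp
  htgt := fun e => by
    have h := θ.htgt (θ.eE.symm e)
    rw [θ.eE.apply_symm_apply] at h
    rw [h]
    cases α.tgt (θ.eE.symm e) <;> simp

/-- An extension of `γ` by `α` at `j` with middle graph `β`. -/
structure ExtAt {n m : ℕ} (α : PreGraph (n + 1)) (γ : PreGraph (m + 1)) (j : Fin (m + 1))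
    (β : PreGraph (n + m + 1)) where
  u : GMor α β
  v : GMor β γ
  ext : IsExtension j u v

/-- A subgraph of `β`: sets of vertices and edges closed under taking endpoints. -/
structure SubG {p : ℕ} (β : PreGraph p) where
  SV : Set (Fin p ⊕ β.V)
  SE : Set β.E
  closed : ∀ e ∈ SE, β.src e ∈ SV ∧ β.tgt e ∈ SV

/-- The image of the injective morphism `u` is the subgraph `S`. -/
def HasImage {n p : ℕ} {α : PreGraph n} {β : PreGraph p} (u : GMor α β) (S : SubG β) :
    Prop :=
  Set.range u.onV = S.SV ∧ {e' : β.E | ∃ e : α.E, u.onE e = Sum.inl e'} = S.SE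

/-!
An extension `(u, v)` is rigid: `u` is injective and `v` is injective off its fibre over `j`,
and that fibre is exactly the image of `u`. So an automorphism of `β` commuting with `u` and `v`
fixes the image of `u` (through `u`) and its complement (through `v`). Two extensions with the
same image `S` have injective first maps with the same image, which therefore differ by an
automorphism of `α`, and surjective second maps with the same kernel (collapse `S` and nothing
else), which therefore differ by an automorphism of `γ`. A free and transitive action on a
nonempty set is in bijection with the acting group, which gives the count.
-/

theorem Function.Injective.exists_equiv_comp_eq {X X' Y : Type*} {f : X → Y} {f' : X' → Y}
    (hf : Function.Injective f) (hf' : Function.Injective f') (h : Set.range f = Set.range f') :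
    ∃ e : X ≃ X', ∀ x, f' (e x) = f x :=
  ⟨(Equiv.ofInjective f hf).trans ((Equiv.setCongr h).trans (Equiv.ofInjective f' hf').symm),
    fun _ => Equiv.apply_ofInjective_symm hf' _⟩

theorem Function.Surjective.exists_equiv_comp_eq {X Y Y' : Type*} {f : X → Y} {f' : X → Y'}
    (hf : Function.Surjective f) (hf' : Function.Surjective f')
    (h : ∀ x y, f x = f y ↔ f' x = f' y) : ∃ e : Y ≃ Y', ∀ x, e (f x) = f' x :=
  ⟨(Setoid.quotientKerEquivOfSurjective f hf).symm.trans
      ((Quotient.congrRight h).trans (Setoid.quotientKerEquivOfSurjective f' hf')),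
    fun x => by
      have hx : (Setoid.quotientKerEquivOfSurjective f hf).symm (f x) = ⟦x⟧ :=
        (Equiv.symm_apply_eq _).2 rfl
      rw [Equiv.trans_apply, hx]
      rfl⟩

theorem Equiv.exists_sumMap_eq {A B A' B' : Type*} (e : A ⊕ B ≃ A' ⊕ B')
    (h : ∀ x, (e x).isLeft ↔ x.isLeft) :
    ∃ (f : A ≃ A') (g : B ≃ B'), ∀ x, e x = Sum.map f g x := by
  have h' (x : A ⊕ B) : (e x).isRight ↔ x.isRight := by
    simpa only [Sum.not_isLeft] using (h x).not
  refine ⟨sumIsLeft.symm.trans ((e.subtypeEquiv fun x => (h x).symm).trans sumIsLeft),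
    sumIsRight.symm.trans ((e.subtypeEquiv fun x => (h' x).symm).trans sumIsRight), ?_⟩
  rintro (a | b) <;> simp [sumIsLeft, sumIsRight]

theorem Equiv.exists_sumMap_id_eq {A B B' : Type*} (e : A ⊕ B ≃ A ⊕ B')
    (h : ∀ a, e (Sum.inl a) = Sum.inl a) : ∃ g : B ≃ B', ∀ x, e x = Sum.map id g x := by
  have hinr (b : B) : (e (Sum.inr b)).isLeft = false := by
    rcases he : e (Sum.inr b) with a | b'
    · exact absurd (e.injective (he.trans (h a).symm)) Sum.inr_ne_inl
    · rfl
  obtain ⟨_, g, hg⟩ := e.exists_sumMap_eq fun x => by rcases x with a | b <;> simp [h, hinr]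
  refine ⟨g, fun x => ?_⟩
  rcases x with a | b
  · simp [h]
  · exact hg _

theorem Set.InjOn.eq_iff_eq_of_preimage_eq {X Y Y' : Type*} {f : X → Y} {f' : X → Y'}
    {y : Y} {y' : Y'} (hf : Set.InjOn f (f ⁻¹' {y})ᶜ) (hf' : Set.InjOn f' (f' ⁻¹' {y'})ᶜ)
    (h : f ⁻¹' {y} = f' ⁻¹' {y'}) (a b : X) : f a = f b ↔ f' a = f' b := by
  have hmem (x : X) : f x = y ↔ f' x = y' := Set.ext_iff.1 h x
  by_cases ha : f a = y
  · rw [ha, (hmem a).1 ha, eq_comm, hmem, eq_comm]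
  · have ha' : f' a ≠ y' := fun ha' => ha ((hmem a).2 ha')
    constructor
    · intro hab
      rw [hf ha (by rwa [Set.mem_compl_iff, Set.mem_preimage, ← hab]) hab]
    · intro hab
      rw [hf' ha' (by rwa [Set.mem_compl_iff, Set.mem_preimage, ← hab]) hab]

theorem Set.InjOn.apply_eq_self_of_comp_eq {X Y : Type*} {f : X → Y} {y : Y} {σ : X → X}
    (hf : Set.InjOn f (f ⁻¹' {y})ᶜ) (hσ : ∀ x, f (σ x) = f x)
    (hfix : ∀ x, f x = y → σ x = x) (x : X) : σ x = x := by
  by_cases hx : f x = y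
  · exact hfix x hx
  · exact hf (by rwa [Set.mem_compl_iff, Set.mem_preimage, hσ]) hx (hσ x)

abbrev PreGraph.Cell {n : ℕ} (β : PreGraph n) : Type := β.E ⊕ (Fin n ⊕ β.V)

namespace GMor

variable {n m p : ℕ} {α : PreGraph n} {β : PreGraph m} {γ : PreGraph p}

theorem onL_eq_of_onV_eq {f g : GMor α β} (hV : f.onV = g.onV) : f.onL = g.onL :=
  funext fun i => Sum.inl_injective (by rw [← f.hL, ← g.hL, hV])

@[ext]
theorem ext {f g : GMor α β} (hV : f.onV = g.onV) (hE : f.onE = g.onE) : f = g := by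
  have hL := onL_eq_of_onV_eq hV
  cases f; cases g
  subst hL hV hE
  rfl

@[simp] theorem comp_onV (g : GMor β γ) (f : GMor α β) (x : Fin n ⊕ α.V) :
    (g.comp f).onV x = g.onV (f.onV x) := rfl

@[simp] theorem comp_onE (g : GMor β γ) (f : GMor α β) (e : α.E) :
    (g.comp f).onE e = g.compE (f.onE e) := rfl

@[simp] theorem compE_inl (g : GMor β γ) (e : β.E) : g.compE (Sum.inl e) = g.onE e := rfl

@[simp] theorem compE_inr (g : GMor β γ) (x : Fin m ⊕ β.V) :
    g.compE (Sum.inr x) = Sum.inr (g.onV x) := rfl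

@[simp] theorem comp_compE (g : GMor β γ) (f : GMor α β) (z : α.Cell) :
    (g.comp f).compE z = g.compE (f.compE z) := by
  rcases z with e | x <;> rfl

def edgeRange (f : GMor α β) : Set β.E := {e' | ∃ e, f.onE e = Sum.inl e'}

theorem mem_edgeRange {f : GMor α β} {e' : β.E} :
    e' ∈ f.edgeRange ↔ ∃ e, f.onE e = Sum.inl e' :=
  Iff.rfl

theorem range_onE_eq {f : GMor α β} (hf : ∀ e, ∃ e', f.onE e = Sum.inl e') :
    Set.range f.onE = Sum.inl '' f.edgeRange := by
  ext x
  constructor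
  · rintro ⟨e, rfl⟩
    obtain ⟨e', he'⟩ := hf e
    exact ⟨e', ⟨e, he'⟩, he'.symm⟩
  · rintro ⟨e', ⟨e, he⟩, rfl⟩
    exact ⟨e, he⟩

theorem range_compE {f : GMor α β} (hf : ∀ e, ∃ e', f.onE e = Sum.inl e') :
    Set.range f.compE = Sum.inl '' f.edgeRange ∪ Sum.inr '' Set.range f.onV := by
  ext z
  constructor
  · rintro ⟨e | x, rfl⟩
    · obtain ⟨e', he'⟩ := hf e
      exact Or.inl ⟨e', ⟨e, he'⟩, he'.symm⟩
    · exact Or.inr ⟨f.onV x, ⟨x, rfl⟩, rfl⟩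
  · rintro (⟨e', ⟨e, he⟩, rfl⟩ | ⟨y, ⟨x, rfl⟩, rfl⟩)
    · exact ⟨Sum.inl e, he⟩
    · exact ⟨Sum.inr x, rfl⟩

end GMor

namespace GIso

variable {n : ℕ} {α β : PreGraph n}

@[ext]
theorem ext {θ θ' : GIso α β} (hV : ∀ w, θ.eV w = θ'.eV w)
    (hE : ∀ e, θ.eE e = θ'.eE e) : θ = θ' := by
  obtain ⟨eV, eE, _, _⟩ := θ
  obtain ⟨eV', eE', _, _⟩ := θ'
  obtain rfl : eV = eV' := Equiv.ext hV
  obtain rfl : eE = eE' := Equiv.ext hE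
  rfl

def refl (α : PreGraph n) : GIso α α where
  eV := Equiv.refl _
  eE := Equiv.refl _
  hsrc _ := (congrFun Sum.map_id_id _).symm
  htgt _ := (congrFun Sum.map_id_id _).symm

@[simp] theorem refl_eE (e : α.E) : (refl α).eE e = e := rfl

@[simp] theorem symm_symm (θ : GIso α β) : θ.symm.symm = θ := rfl

theorem symm_injective : Function.Injective (symm : GIso α β → GIso β α) :=
  Function.LeftInverse.injective symm_symm

@[simp] theorem symm_refl : (refl α).symm = refl α := rfl

def vertexEquiv (θ : GIso α β) : Fin n ⊕ α.V ≃ Fin n ⊕ β.V :=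
  (Equiv.refl _).sumCongr θ.eV

def cellEquiv (θ : GIso α β) : α.Cell ≃ β.Cell := θ.eE.sumCongr θ.vertexEquiv

@[simp] theorem vertexEquiv_inl (θ : GIso α β) (i : Fin n) :
    θ.vertexEquiv (Sum.inl i) = Sum.inl i := rfl

@[simp] theorem vertexEquiv_inr (θ : GIso α β) (w : α.V) :
    θ.vertexEquiv (Sum.inr w) = Sum.inr (θ.eV w) := rfl

@[simp] theorem cellEquiv_inl (θ : GIso α β) (e : α.E) :
    θ.cellEquiv (Sum.inl e) = Sum.inl (θ.eE e) := rfl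

@[simp] theorem cellEquiv_inr (θ : GIso α β) (x : Fin n ⊕ α.V) :
    θ.cellEquiv (Sum.inr x) = Sum.inr (θ.vertexEquiv x) := rfl

@[simp] theorem cellEquiv_symm_inl (θ : GIso α β) (e : β.E) :
    θ.cellEquiv.symm (Sum.inl e) = Sum.inl (θ.eE.symm e) := rfl

@[simp] theorem symm_vertexEquiv (θ : GIso α β) : θ.symm.vertexEquiv = θ.vertexEquiv.symm :=
  rfl

@[simp] theorem symm_cellEquiv (θ : GIso α β) : θ.symm.cellEquiv = θ.cellEquiv.symm := rfl

@[simp] theorem symm_eE (θ : GIso α β) : θ.symm.eE = θ.eE.symm := rfl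

@[simp] theorem refl_vertexEquiv (x : Fin n ⊕ α.V) : (refl α).vertexEquiv x = x := by
  rcases x with i | w <;> rfl

@[simp] theorem refl_cellEquiv (z : α.Cell) : (refl α).cellEquiv z = z := by
  rcases z with e | x <;> simp [cellEquiv]

theorem vertexEquiv_eq_inl_iff (θ : GIso α β) {x : Fin n ⊕ α.V} {i : Fin n} :
    θ.vertexEquiv x = Sum.inl i ↔ x = Sum.inl i := by
  rw [← θ.vertexEquiv_inl, θ.vertexEquiv.apply_eq_iff_eq]

theorem cellEquiv_eq_inr_inl_iff (θ : GIso α β) {z : α.Cell} {i : Fin n} :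
    θ.cellEquiv z = Sum.inr (Sum.inl i) ↔ z = Sum.inr (Sum.inl i) := by
  rw [← vertexEquiv_inl θ, ← θ.cellEquiv_inr, θ.cellEquiv.apply_eq_iff_eq]

theorem ext_of_cellEquiv {θ θ' : GIso α β} (h : ∀ z, θ.cellEquiv z = θ'.cellEquiv z) :
    θ = θ' :=
  ext (fun w => by simpa using h (Sum.inr (Sum.inr w))) (fun e => by simpa using h (Sum.inl e))

@[simp] theorem toGMor_onV (θ : GIso α β) (x : Fin n ⊕ α.V) :
    θ.toGMor.onV x = θ.vertexEquiv x := rfl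

@[simp] theorem toGMor_onE (θ : GIso α β) (e : α.E) :
    θ.toGMor.onE e = Sum.inl (θ.eE e) := rfl

@[simp] theorem toGMor_compE (θ : GIso α β) (z : α.Cell) :
    θ.toGMor.compE z = θ.cellEquiv z := by
  rcases z with e | x <;> rfl

end GIso

namespace GMor

variable {n m p : ℕ} {α α' : PreGraph n} {β β' : PreGraph m} {γ γ' : PreGraph p}

@[simp] theorem comp_refl (f : GMor α β) : f.comp (GIso.refl α).toGMor = f := by
  ext x <;> simp

@[simp] theorem refl_comp (f : GMor α β) : (GIso.refl β).toGMor.comp f = f := by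
  ext x <;> simp

theorem comp_symm_eq_iff (f : GMor α β) (g : GMor α' β) (θ : GIso α α') :
    f.comp θ.symm.toGMor = g ↔ f = g.comp θ.toGMor := by
  constructor <;> rintro rfl <;> ext x <;> simp

theorem edgeRange_comp_toGMor (f : GMor α β) (θ : GIso α' α) :
    (f.comp θ.toGMor).edgeRange = f.edgeRange := by
  ext e'
  simp only [mem_edgeRange, comp_onE, GIso.toGMor_onE, compE_inl]
  exact ⟨fun ⟨_, he⟩ => ⟨_, he⟩,
    fun ⟨e, he⟩ => ⟨θ.eE.symm e, by rwa [Equiv.apply_symm_apply]⟩⟩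

theorem range_toGMor_comp_onV (θ : GIso β β') (f : GMor α β) :
    Set.range (θ.toGMor.comp f).onV = θ.vertexEquiv.symm ⁻¹' Set.range f.onV := by
  rw [← Equiv.image_eq_preimage_symm, ← Set.range_comp]
  rfl

theorem edgeRange_toGMor_comp (θ : GIso β β') (f : GMor α β) :
    (θ.toGMor.comp f).edgeRange = θ.eE.symm ⁻¹' f.edgeRange := by
  ext e'
  simp only [mem_edgeRange, comp_onE, GIso.toGMor_compE, Set.mem_preimage,
    ← Equiv.eq_symm_apply, GIso.cellEquiv_symm_inl]

theorem comp_toGMor_injective (f : GMor α β) (hf : Function.Injective f.compE) :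
    Function.Injective fun a : GIso α' α => f.comp a.toGMor := fun a a' h =>
  GIso.ext_of_cellEquiv fun z => hf <| by
    simpa using congrFun (congrArg compE h) z

theorem toGMor_comp_injective (f : GMor β γ) (hf : Function.Surjective f.compE) :
    Function.Injective fun c : GIso γ γ' => c.toGMor.comp f := fun c c' h =>
  GIso.ext_of_cellEquiv <| hf.forall.2 fun z => by
    simpa using congrFun (congrArg compE h) z

theorem exists_iso_comp_eq_of_injective {f : GMor α β} {f' : GMor α' β} (hL : f.onL = f'.onL)
    (hV : Function.Injective f.onV) (hV' : Function.Injective f'.onV)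
    (hE : Function.Injective f.onE) (hE' : Function.Injective f'.onE)
    (hrV : Set.range f.onV = Set.range f'.onV) (hrE : Set.range f.onE = Set.range f'.onE) :
    ∃ a : GIso α α', f'.comp a.toGMor = f := by
  obtain ⟨eV₀, heV₀⟩ := Function.Injective.exists_equiv_comp_eq hV hV' hrV
  obtain ⟨eV, heV⟩ := eV₀.exists_sumMap_id_eq fun i => hV' <| by
    rw [heV₀, f.hL, f'.hL, hL]
  obtain ⟨eE, heE⟩ := Function.Injective.exists_equiv_comp_eq hE hE' hrE
  have hmapV (x : Fin n ⊕ α.V) : f'.onV (Sum.map id eV x) = f.onV x := heV x ▸ heV₀ x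
  have hends (e : α.E) :
      (f'.onV (α'.src (eE e)), f'.onV (α'.tgt (eE e))) =
        (f'.onV (Sum.map id eV (α.src e)), f'.onV (Sum.map id eV (α.tgt e))) := by
    rw [← f'.hE, heE, f.hE, hmapV, hmapV]
  refine ⟨⟨eV, eE, fun e => hV' (Prod.ext_iff.1 (hends e)).1,
    fun e => hV' (Prod.ext_iff.1 (hends e)).2⟩, ?_⟩
  ext x
  · exact hmapV x
  · exact heE x

theorem exists_iso_comp_eq_of_surjective {f : GMor β γ} {f' : GMor β γ'} (hL : f.onL = f'.onL)
    (hLsurj : Function.Surjective f.onL) (hV : Function.Surjective f.onV)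
    (hV' : Function.Surjective f'.onV) (hC : Function.Surjective f.compE)
    (hC' : Function.Surjective f'.compE)
    (hker : ∀ x y, f.compE x = f.compE y ↔ f'.compE x = f'.compE y) :
    ∃ c : GIso γ γ', c.toGMor.comp f = f' := by
  obtain ⟨E, hE⟩ := hC.exists_equiv_comp_eq hC' hker
  have hEV (x : Fin m ⊕ β.V) : E (Sum.inr (f.onV x)) = Sum.inr (f'.onV x) := hE (Sum.inr x)
  -- `E` cannot send an edge cell to a vertex cell: every vertex cell of `γ'` is already the
  -- image of a vertex cell of `γ`.
  have hEleft (z : γ.Cell) : (E z).isLeft ↔ z.isLeft := by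
    rcases z with g | y
    · simp only [Sum.isLeft_inl, iff_true]
      rcases hEg : E (Sum.inl g) with g' | y'
      · rfl
      · obtain ⟨x, rfl⟩ := hV' y'
        exact absurd (E.injective (hEg.trans (hEV x).symm)) Sum.inl_ne_inr
    · obtain ⟨x, rfl⟩ := hV y
      simp [hEV]
  obtain ⟨cE, E₂, hE₂⟩ := E.exists_sumMap_eq hEleft
  have hE₂V (x : Fin m ⊕ β.V) : E₂ (f.onV x) = f'.onV x :=
    Sum.inr_injective ((hE₂ _).symm.trans (hEV x))
  obtain ⟨cV, hcV⟩ := E₂.exists_sumMap_id_eq fun i => by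
    obtain ⟨k, rfl⟩ := hLsurj i
    rw [← f.hL, hE₂V, f'.hL, hL]
  have hEcell (z : γ.Cell) : E z = Sum.map cE (Sum.map id cV) z := by
    rw [hE₂ z, ← funext hcV]
  have hends (z : γ.Cell) :
      γ'.ends (E z) = Prod.map (Sum.map id cV) (Sum.map id cV) (γ.ends z) := by
    obtain ⟨x, rfl⟩ := hC z
    rw [hE, ends_compE, ends_compE, Prod.map, ← hcV, ← hcV, hE₂V, hE₂V]
  refine ⟨⟨cV, cE, fun g => ?_, fun g => ?_⟩, ?_⟩
  · simpa [hEcell, PreGraph.ends] using congrArg Prod.fst (hends (Sum.inl g))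
  · simpa [hEcell, PreGraph.ends] using congrArg Prod.snd (hends (Sum.inl g))
  ext x
  · exact (hcV _).symm.trans (hE₂V x)
  · exact (GIso.toGMor_compE _ _).trans ((hEcell _).symm.trans (hE (Sum.inl x)))

end GMor

theorem qmap_surjective (n : ℕ) {m : ℕ} (j : Fin (m + 1)) :
    Function.Surjective (qmap n j) := by
  intro i
  by_cases h : i.val ≤ j.val
  · exact ⟨⟨i.val, by omega⟩, by simp [qmap, h]⟩
  · refine ⟨⟨i.val + n, by omega⟩, ?_⟩
    simp only [qmap, dif_neg (show ¬ i.val + n ≤ j.val by omega),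
      dif_neg (show ¬ i.val + n ≤ j.val + n by omega)]
    exact Fin.ext (by simp)

theorem HasImage.comp_toGMor {n p : ℕ} {α α' : PreGraph n} {β : PreGraph p} {u : GMor α β}
    {S : SubG β} (hS : HasImage u S) (a : GIso α' α) : HasImage (u.comp a.toGMor) S :=
  ⟨(a.vertexEquiv.surjective.range_comp u.onV).trans hS.1,
    (u.edgeRange_comp_toGMor a).trans hS.2⟩

namespace IsExtension

variable {n m : ℕ} {α α' : PreGraph (n + 1)} {β β' : PreGraph (n + m + 1)}
  {γ γ' : PreGraph (m + 1)} {j : Fin (m + 1)} {u u' : GMor α β} {v v' : GMor β γ}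

theorem mem_range_onV_iff (h : IsExtension j u v) (x : Fin (n + m + 1) ⊕ β.V) :
    x ∈ Set.range u.onV ↔ v.onV x = Sum.inl j :=
  Set.ext_iff.1 h.imV x

theorem edgeRange_eq (h : IsExtension j u v) :
    u.edgeRange = {e' | v.onE e' = Sum.inr (Sum.inl j)} :=
  h.imE

theorem mem_edgeRange_iff (h : IsExtension j u v) (e' : β.E) :
    e' ∈ u.edgeRange ↔ v.onE e' = Sum.inr (Sum.inl j) :=
  Set.ext_iff.1 h.imE e'

theorem onL_eq_left (h : IsExtension j u v) (h' : IsExtension j u' v') : u.onL = u'.onL :=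
  funext fun i => Fin.ext ((h.uLab i).trans (h'.uLab i).symm)

theorem onL_eq_right (h : IsExtension j u v) (h' : IsExtension j u' v') : v.onL = v'.onL :=
  funext fun i => (h.vLab i).trans (h'.vLab i).symm

theorem compE_injective (h : IsExtension j u v) : Function.Injective u.compE := by
  rintro (e | x) (e' | x') hzz
  · exact congrArg Sum.inl (h.uEinj hzz)
  · obtain ⟨b, hb⟩ := h.uEedge e
    simp [hb] at hzz
  · obtain ⟨b, hb⟩ := h.uEedge e'
    simp [hb] at hzz
  · exact congrArg Sum.inr (h.uVinj (Sum.inr_injective hzz))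

theorem compE_surjective (h : IsExtension j u v) : Function.Surjective v.compE := by
  rintro (g | y)
  · obtain ⟨e, he⟩ := h.vEsurj g
    exact ⟨Sum.inl e, he⟩
  · obtain ⟨x, hx⟩ := h.vVsurj y
    exact ⟨Sum.inr x, congrArg Sum.inr hx⟩

theorem preimage_compE_eq_range (h : IsExtension j u v) :
    v.compE ⁻¹' {Sum.inr (Sum.inl j)} = Set.range u.compE := by
  rw [GMor.range_compE h.uEedge]
  ext (e' | x)
  · simp [← h.mem_edgeRange_iff]
  · simp [← h.mem_range_onV_iff]

theorem injOn_compE (h : IsExtension j u v) :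
    Set.InjOn v.compE (v.compE ⁻¹' {Sum.inr (Sum.inl j)})ᶜ := by
  have hedge (e' : β.E) (he' : v.onE e' ≠ Sum.inr (Sum.inl j)) : ∃ g, v.onE e' = Sum.inl g :=
    h.compEedge e' fun hmem => he' ((h.mem_edgeRange_iff e').1 hmem)
  rintro (e | x) hz (e' | x') hz' hzz
  · exact congrArg Sum.inl <| h.compEinj (mt (h.mem_edgeRange_iff e).1 hz)
      (mt (h.mem_edgeRange_iff e').1 hz') hzz
  · obtain ⟨g, hg⟩ := hedge e hz
    simp [hg] at hzz
  · obtain ⟨g, hg⟩ := hedge e' hz'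
    simp [hg] at hzz
  · have hx : x ∉ Set.range u.onV := mt (h.mem_range_onV_iff x).1 (by simpa using hz)
    have hx' : x' ∉ Set.range u.onV := mt (h.mem_range_onV_iff x').1 (by simpa using hz')
    exact congrArg Sum.inr (h.compVinj hx hx' (Sum.inr_injective hzz))

theorem iso_comp_comp_symm (h : IsExtension j u v) (θ : GIso β β') :
    IsExtension j (θ.toGMor.comp u) (v.comp θ.symm.toGMor) where
  uLab := h.uLab
  vLab := h.vLab
  uVinj := θ.vertexEquiv.injective.comp h.uVinj
  uEedge e := let ⟨e', he'⟩ := h.uEedge e; ⟨θ.eE e', by simp [he']⟩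
  uEinj _ _ hee := h.uEinj (θ.cellEquiv.injective (by simpa using hee))
  vVsurj := h.vVsurj.comp θ.vertexEquiv.symm.surjective
  vEsurj g := let ⟨e, he⟩ := h.vEsurj g; ⟨θ.eE e, by simpa using he⟩
  imV := by rw [GMor.range_toGMor_comp_onV, h.imV]; rfl
  imE := by
    change (θ.toGMor.comp u).edgeRange = _
    rw [GMor.edgeRange_toGMor_comp, h.edgeRange_eq]
    rfl
  compEedge e' he' := h.compEedge (θ.eE.symm e') <| by
    rwa [← GMor.mem_edgeRange, ← Set.mem_preimage, ← GMor.edgeRange_toGMor_comp]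
  compVinj := by
    rw [GMor.range_toGMor_comp_onV]
    exact h.compVinj.comp θ.vertexEquiv.symm.injective.injOn fun _ hx => hx
  compEinj := by
    change Set.InjOn _ (θ.toGMor.comp u).edgeRangeᶜ
    rw [GMor.edgeRange_toGMor_comp]
    exact h.compEinj.comp θ.eE.symm.injective.injOn fun _ hx => hx

theorem comp_iso (h : IsExtension j u v) (a : GIso α' α) :
    IsExtension j (u.comp a.toGMor) v where
  uLab := h.uLab
  vLab := h.vLab
  uVinj := h.uVinj.comp a.vertexEquiv.injective
  uEedge e := h.uEedge (a.eE e)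
  uEinj := h.uEinj.comp a.eE.injective
  vVsurj := h.vVsurj
  vEsurj := h.vEsurj
  imV := (a.vertexEquiv.surjective.range_comp u.onV).trans h.imV
  imE := (u.edgeRange_comp_toGMor a).trans h.imE
  compEedge e' he' := h.compEedge e' <| by
    rwa [← GMor.mem_edgeRange, ← GMor.edgeRange_comp_toGMor u a]
  compVinj := by
    change Set.InjOn _ (Set.range (u.onV ∘ a.vertexEquiv))ᶜ
    rw [a.vertexEquiv.surjective.range_comp]
    exact h.compVinj
  compEinj := by
    change Set.InjOn _ (u.comp a.toGMor).edgeRangeᶜ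
    rw [GMor.edgeRange_comp_toGMor]
    exact h.compEinj

theorem iso_comp (h : IsExtension j u v) (c : GIso γ γ') :
    IsExtension j u (c.toGMor.comp v) where
  uLab := h.uLab
  vLab := h.vLab
  uVinj := h.uVinj
  uEedge := h.uEedge
  uEinj := h.uEinj
  vVsurj := c.vertexEquiv.surjective.comp h.vVsurj
  vEsurj g := let ⟨e, he⟩ := h.vEsurj (c.eE.symm g); ⟨e, by simp [he]⟩
  imV := by
    rw [h.imV]
    ext x
    simp [c.vertexEquiv_eq_inl_iff]
  imE := by
    rw [h.imE]
    ext e'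
    simp [c.cellEquiv_eq_inr_inl_iff]
  compEedge e' he' := let ⟨g, hg⟩ := h.compEedge e' he'; ⟨c.eE g, by simp [hg]⟩
  compVinj := c.vertexEquiv.injective.comp_injOn h.compVinj
  compEinj _ hx _ hy hxy := h.compEinj hx hy (c.cellEquiv.injective (by simpa using hxy))

theorem eq_refl_of_iso_comp_eq (h : IsExtension j u v) {θ : GIso β β}
    (hu : θ.toGMor.comp u = u) (hv : v.comp θ.symm.toGMor = v) : θ = GIso.refl β := by
  refine GIso.symm_injective (GIso.ext_of_cellEquiv fun z => ?_)
  simp only [GIso.symm_cellEquiv, GIso.symm_refl, GIso.refl_cellEquiv]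
  refine h.injOn_compE.apply_eq_self_of_comp_eq (fun z => ?_) (fun z hz => ?_) z
  · simpa using congrFun (congrArg GMor.compE hv) z
  · obtain ⟨c, rfl⟩ : z ∈ Set.range u.compE := h.preimage_compE_eq_range ▸ hz
    rw [Equiv.symm_apply_eq]
    simpa using (congrFun (congrArg GMor.compE hu) c).symm

theorem eq_refl_of_comp_eq (h : IsExtension j u v) {a : GIso α α} (hu : u.comp a.toGMor = u) :
    a = GIso.refl α :=
  u.comp_toGMor_injective h.compE_injective (hu.trans u.comp_refl.symm)

theorem eq_refl_of_toGMor_comp_eq (h : IsExtension j u v) {c : GIso γ γ}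
    (hv : c.toGMor.comp v = v) : c = GIso.refl γ :=
  v.toGMor_comp_injective h.compE_surjective (hv.trans v.refl_comp.symm)

theorem exists_iso_comp_eq_left (h : IsExtension j u v) (h' : IsExtension j u' v')
    (hV : Set.range u.onV = Set.range u'.onV) (hE : u.edgeRange = u'.edgeRange) :
    ∃ a : GIso α α, u'.comp a.toGMor = u :=
  GMor.exists_iso_comp_eq_of_injective (h.onL_eq_left h') h.uVinj h'.uVinj h.uEinj h'.uEinj hV
    (by rw [GMor.range_onE_eq h.uEedge, GMor.range_onE_eq h'.uEedge, hE])

theorem exists_iso_comp_eq_right (h : IsExtension j u v) (h' : IsExtension j u' v')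
    (hV : Set.range u.onV = Set.range u'.onV) (hE : u.edgeRange = u'.edgeRange) :
    ∃ c : GIso γ γ, c.toGMor.comp v = v' := by
  have hfibre : v.compE ⁻¹' {Sum.inr (Sum.inl j)} = v'.compE ⁻¹' {Sum.inr (Sum.inl j)} := by
    rw [h.preimage_compE_eq_range, h'.preimage_compE_eq_range, GMor.range_compE h.uEedge,
      GMor.range_compE h'.uEedge, hV, hE]
  refine GMor.exists_iso_comp_eq_of_surjective (h.onL_eq_right h') ?_ h.vVsurj h'.vVsurj
    h.compE_surjective h'.compE_surjective
    (h.injOn_compE.eq_iff_eq_of_preimage_eq h'.injOn_compE hfibre)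
  rw [funext h.vLab]
  exact qmap_surjective n j

theorem exists_iso_of_hasImage {S : SubG β} (h : IsExtension j u v) (h' : IsExtension j u' v')
    (hS : HasImage u S) (hS' : HasImage u' S) :
    ∃ (a : GIso α α) (c : GIso γ γ), u.comp a.symm.toGMor = u' ∧ c.toGMor.comp v = v' := by
  have hV : Set.range u.onV = Set.range u'.onV := hS.1.trans hS'.1.symm
  have hE : u.edgeRange = u'.edgeRange := hS.2.trans hS'.2.symm
  obtain ⟨a, ha⟩ := h.exists_iso_comp_eq_left h' hV hE
  obtain ⟨c, hc⟩ := h.exists_iso_comp_eq_right h' hV hE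
  exact ⟨a, c, (u.comp_symm_eq_iff u' a).2 ha.symm, hc⟩

end IsExtension
theorem ExtAt.eq_of_u_eq_of_v_eq {n m : ℕ} {α : PreGraph (n + 1)} {γ : PreGraph (m + 1)}
    {j : Fin (m + 1)} {β : PreGraph (n + m + 1)} {x y : ExtAt α γ j β}
    (hu : x.u = y.u) (hv : x.v = y.v) : x = y := by
  cases x; cases y
  subst hu hv
  rfl

theorem card_extAt_hasImage {n m : ℕ} {α : PreGraph (n + 1)} {γ : PreGraph (m + 1)}
    {j : Fin (m + 1)} {β : PreGraph (n + m + 1)} (S : SubG β) :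
    Nat.card {x : ExtAt α γ j β // HasImage x.u S} = 0 ∨
      Nat.card {x : ExtAt α γ j β // HasImage x.u S} =
        Nat.card (GIso α α) * Nat.card (GIso γ γ) := by
  rcases isEmpty_or_nonempty {x : ExtAt α γ j β // HasImage x.u S} with
    _ | ⟨⟨x₀, hx₀⟩⟩
  · exact Or.inl Nat.card_of_isEmpty
  right
  let act (p : GIso α α × GIso γ γ) : {x : ExtAt α γ j β // HasImage x.u S} :=
    ⟨⟨x₀.u.comp p.1.symm.toGMor, p.2.toGMor.comp x₀.v, (x₀.ext.comp_iso _).iso_comp _⟩,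
      hx₀.comp_toGMor _⟩
  have hact : Function.Bijective act := by
    constructor
    · rintro ⟨a, c⟩ ⟨a', c'⟩ hac
      have hu := congrArg (fun x => x.1.u) hac
      have hv := congrArg (fun x => x.1.v) hac
      exact Prod.ext
        (GIso.symm_injective (x₀.u.comp_toGMor_injective x₀.ext.compE_injective hu))
        (x₀.v.toGMor_comp_injective x₀.ext.compE_surjective hv)
    · rintro ⟨x, hx⟩
      obtain ⟨a, c, ha, hc⟩ := x₀.ext.exists_iso_of_hasImage x.ext hx₀ hx
      exact ⟨(a, c), Subtype.ext (ExtAt.eq_of_u_eq_of_v_eq ha hc)⟩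
  rw [← Nat.card_congr (Equiv.ofBijective act hact), Nat.card_prod]

theorem extension_counting_core_general
    {n m : ℕ} (α : PreGraph (n + 1)) (γ : PreGraph (m + 1)) (j : Fin (m + 1))
    (β : PreGraph (n + m + 1)) :
    -- (i) the action of `Aut β` is well defined on extensions …
    (∀ (θ : GIso β β) (u : GMor α β) (v : GMor β γ), IsExtension j u v →
      IsExtension j (GMor.comp θ.toGMor u) (GMor.comp v θ.symm.toGMor)) ∧
    -- … it is free …
    (∀ (θ : GIso β β) (u : GMor α β) (v : GMor β γ), IsExtension j u v →
      GMor.comp θ.toGMor u = u → GMor.comp v θ.symm.toGMor = v →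
      (∀ w : β.V, θ.eV w = w) ∧ (∀ e : β.E, θ.eE e = e)) ∧
    -- … and its orbits are precisely the equivalence classes of extensions.
    (∀ (u : GMor α β) (v : GMor β γ) (u' : GMor α β) (v' : GMor β γ),
      IsExtension j u v → IsExtension j u' v' →
      ((∃ θ : GIso β β, GMor.comp θ.toGMor u = u' ∧ GMor.comp v' θ.toGMor = v) ↔
       (∃ θ : GIso β β, GMor.comp θ.toGMor u = u' ∧ GMor.comp v θ.symm.toGMor = v'))) ∧
    -- (ii) the action of `Aut α × Aut γ` is well defined on extensions with image `S` …
    (∀ (a : GIso α α) (c : GIso γ γ) (S : SubG β) (u : GMor α β) (v : GMor β γ),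
      IsExtension j u v → HasImage u S →
      IsExtension j (GMor.comp u a.symm.toGMor) (GMor.comp c.toGMor v) ∧
        HasImage (GMor.comp u a.symm.toGMor) S) ∧
    -- … it is free …
    (∀ (a : GIso α α) (c : GIso γ γ) (u : GMor α β) (v : GMor β γ), IsExtension j u v →
      GMor.comp u a.symm.toGMor = u → GMor.comp c.toGMor v = v →
      ((∀ w : α.V, a.eV w = w) ∧ (∀ e : α.E, a.eE e = e)) ∧
      ((∀ w : γ.V, c.eV w = w) ∧ (∀ e : γ.E, c.eE e = e))) ∧
    -- … and transitive on extensions with a common image `S`.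
    (∀ (S : SubG β) (u : GMor α β) (v : GMor β γ) (u' : GMor α β) (v' : GMor β γ),
      IsExtension j u v → IsExtension j u' v' → HasImage u S → HasImage u' S →
      ∃ (a : GIso α α) (c : GIso γ γ),
        GMor.comp u a.symm.toGMor = u' ∧ GMor.comp c.toGMor v = v') ∧
    -- Consequently, the number of extensions with image `S` is `0` or `|Aut α|·|Aut γ|`.
    (∀ S : SubG β,
      Nat.card {x : ExtAt α γ j β // HasImage x.u S} = 0 ∨
      Nat.card {x : ExtAt α γ j β // HasImage x.u S} =
        Nat.card (GIso α α) * Nat.card (GIso γ γ)) := by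
  refine ⟨fun θ _ _ h => h.iso_comp_comp_symm θ,
    fun _ _ _ h hu hv => ?_,
    fun _ v _ v' _ _ => ?_,
    fun a c _ _ _ h hS => ⟨(h.comp_iso a.symm).iso_comp c, hS.comp_toGMor a.symm⟩,
    fun a _ _ _ h hu hv => ?_,
    fun _ _ _ _ _ h h' hS hS' => h.exists_iso_of_hasImage h' hS hS',
    card_extAt_hasImage⟩
  · obtain rfl := h.eq_refl_of_iso_comp_eq hu hv
    exact ⟨fun _ => rfl, fun _ => rfl⟩
  · exact exists_congr fun θ =>
      and_congr_right' ((GMor.comp_symm_eq_iff v v' θ).trans eq_comm).symm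
  · obtain rfl : a = GIso.refl α := congrArg GIso.symm (h.eq_refl_of_comp_eq hu)
    obtain rfl := h.eq_refl_of_toGMor_comp_eq hv
    exact ⟨⟨fun _ => rfl, fun _ => rfl⟩, fun _ => rfl, fun _ => rfl⟩

/-- counting core of the Lemma on partial composition.
(i) `Aut β` acts freely on the set of extensions of `γ` by `α` at `j` with middle graph `β`
via `θ·(u, v) = (θ∘u, v∘θ⁻¹)`, and its orbits are exactly the equivalence classes of
extensions.
(ii) For each subgraph `S ⊆ β`, the group `Aut α × Aut γ` acts freely and transitively on the
set of such extensions whose image is `S`, via `(a, c)·(u, v) = (u∘a⁻¹, c∘v)`; consequently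
the number of extensions with image `S` is either `0` or `|Aut α|·|Aut γ|`. -/
theorem extension_counting_core
    {n m : ℕ} (α : PreGraph (n + 1)) (γ : PreGraph (m + 1)) (j : Fin (m + 1))
    (β : PreGraph (n + m + 1)) (hα : α.IsGraph) (hγ : γ.IsGraph) (hβ : β.IsGraph) :
    -- (i) the action of `Aut β` is well defined on extensions …
    (∀ (θ : GIso β β) (u : GMor α β) (v : GMor β γ), IsExtension j u v →
      IsExtension j (GMor.comp θ.toGMor u) (GMor.comp v θ.symm.toGMor)) ∧
    -- … it is free …
    (∀ (θ : GIso β β) (u : GMor α β) (v : GMor β γ), IsExtension j u v →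
      GMor.comp θ.toGMor u = u → GMor.comp v θ.symm.toGMor = v →
      (∀ w : β.V, θ.eV w = w) ∧ (∀ e : β.E, θ.eE e = e)) ∧
    -- … and its orbits are precisely the equivalence classes of extensions.
    (∀ (u : GMor α β) (v : GMor β γ) (u' : GMor α β) (v' : GMor β γ),
      IsExtension j u v → IsExtension j u' v' →
      ((∃ θ : GIso β β, GMor.comp θ.toGMor u = u' ∧ GMor.comp v' θ.toGMor = v) ↔
       (∃ θ : GIso β β, GMor.comp θ.toGMor u = u' ∧ GMor.comp v θ.symm.toGMor = v'))) ∧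
    -- (ii) the action of `Aut α × Aut γ` is well defined on extensions with image `S` …
    (∀ (a : GIso α α) (c : GIso γ γ) (S : SubG β) (u : GMor α β) (v : GMor β γ),
      IsExtension j u v → HasImage u S →
      IsExtension j (GMor.comp u a.symm.toGMor) (GMor.comp c.toGMor v) ∧
        HasImage (GMor.comp u a.symm.toGMor) S) ∧
    -- … it is free …
    (∀ (a : GIso α α) (c : GIso γ γ) (u : GMor α β) (v : GMor β γ), IsExtension j u v →
      GMor.comp u a.symm.toGMor = u → GMor.comp c.toGMor v = v →
      ((∀ w : α.V, a.eV w = w) ∧ (∀ e : α.E, a.eE e = e)) ∧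
      ((∀ w : γ.V, c.eV w = w) ∧ (∀ e : γ.E, c.eE e = e))) ∧
    -- … and transitive on extensions with a common image `S`.
    (∀ (S : SubG β) (u : GMor α β) (v : GMor β γ) (u' : GMor α β) (v' : GMor β γ),
      IsExtension j u v → IsExtension j u' v' → HasImage u S → HasImage u' S →
      ∃ (a : GIso α α) (c : GIso γ γ),
        GMor.comp u a.symm.toGMor = u' ∧ GMor.comp c.toGMor v = v') ∧
    -- Consequently, the number of extensions with image `S` is `0` or `|Aut α|·|Aut γ|`.
    (∀ S : SubG β,
      Nat.card {x : ExtAt α γ j β // HasImage x.u S} = 0 ∨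
      Nat.card {x : ExtAt α γ j β // HasImage x.u S} =
        Nat.card (GIso α α) * Nat.card (GIso γ γ)) :=
  extension_counting_core_general α γ j β
end

section
/- (i) 𝒢₂(2) ⊆ 𝒢₄(2). (ii) Let γ ∈ 𝒢₄(2) and let α ⊆ γ be the subgraph consisting of the labelled vertex 1 together with all edges outgoing from vertex 1 and their target vertices. If no edge outgoing from the labelled vertex 2 has as its target an unlabelled vertex that is neither a vertex of α nor a sink of γ, then every edge of γ goes either from a labelled vertex to an unlabelled vertex or from vertex 2 to vertex 1; that is, γ ∈ 𝒢₂(2). (This is the cancellation step in the proof of the paper's Theorem giving the graphical formula for the interacting star product ⋆_{𝒯,int}.) -/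
attribute [local instance] Classical.propDecidable

namespace PreGraph

/-- One directed step along an edge. -/
def Step {n : ℕ} (γ : PreGraph n) (x y : Fin n ⊕ γ.V) : Prop :=
  ∃ e : γ.E, γ.src e = x ∧ γ.tgt e = y

/-- Existence of a directed path (possibly empty). -/
def Reaches {n : ℕ} (γ : PreGraph n) : (Fin n ⊕ γ.V) → (Fin n ⊕ γ.V) → Prop :=
  Relation.ReflTransGen γ.Step

/-- There are no directed cycles. -/
def NoCycles {n : ℕ} (γ : PreGraph n) : Prop :=
  ∀ e : γ.E, ¬ γ.Reaches (γ.tgt e) (γ.src e)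

/-- A sink: an unlabelled vertex with no outgoing edges. -/
def IsSink {n : ℕ} (γ : PreGraph n) (w : γ.V) : Prop :=
  ¬ ∃ e : γ.E, γ.src e = Sum.inr w

end PreGraph

/-- `𝒢₂(1)`: every edge goes from the labelled vertex `1` to an unlabelled vertex. -/
def G2one (α : PreGraph 1) : Prop :=
  ∀ e : α.E, α.src e = Sum.inl 0 ∧ ∃ w : α.V, α.tgt e = Sum.inr w

/-- `𝒢₂(2)`: every edge goes from a labelled vertex to an unlabelled vertex or from the
labelled vertex `2` to the labelled vertex `1`. -/
def G2two (γ : PreGraph 2) : Prop :=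
  ∀ e : γ.E,
    ((γ.src e = Sum.inl 0 ∨ γ.src e = Sum.inl 1) ∧ ∃ w : γ.V, γ.tgt e = Sum.inr w) ∨
    (γ.src e = Sum.inl 1 ∧ γ.tgt e = Sum.inl 0)

/-- `𝒢₃(2)`: every unlabelled vertex has at least one ingoing and one outgoing edge, there
are no directed cycles, and there is no directed path from vertex `1` to vertex `2`. -/
def G3two (δ : PreGraph 2) : Prop :=
  (∀ w : δ.V, (∃ e : δ.E, δ.tgt e = Sum.inr w) ∧ (∃ e : δ.E, δ.src e = Sum.inr w)) ∧
    δ.NoCycles ∧ ¬ δ.Reaches (Sum.inl 0) (Sum.inl 1)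

/-- `𝒢₄(2)`: graphs obtained from a graph in `𝒢₃(2)` by an extension by a graph in `𝒢₂(1)`
at the labelled vertex `1` followed by an extension by a graph in `𝒢₂(1)` at the labelled
vertex `2`. -/
def G4two (γ : PreGraph 2) : Prop :=
  ∃ (α₁ α₂ : PreGraph 1) (δ β' : PreGraph 2)
    (u₁ : GMor α₁ β') (v₁ : GMor β' δ) (u₂ : GMor α₂ γ) (v₂ : GMor γ β'),
      α₁.IsGraph ∧ α₂.IsGraph ∧ δ.IsGraph ∧ β'.IsGraph ∧
      G2one α₁ ∧ G2one α₂ ∧ G3two δ ∧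
      IsExtension (0 : Fin 2) u₁ v₁ ∧ IsExtension (1 : Fin 2) u₂ v₂


/-!
Labels are `Fin 2`: `inl 0` is the paper's vertex 1 and `inl 1` its vertex 2.

(i) Collapsing into vertex 2 the edges from 2 to the vertices not hit from 1, and then into
vertex 1 all remaining edges from 1 to unlabelled vertices, are two extensions by graphs in
`𝒢₂(1)`. What is left of `γ ∈ 𝒢₂(2)` has no unlabelled vertices and only edges from 2 to 1, so
it lies in `𝒢₃(2)`.

(ii) No edge of `δ ∈ 𝒢₃(2)` leaves vertex 1, so every edge of `γ` leaving vertex 1 ends in the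
first attached star. Hence no vertex of the second star is hit from vertex 1, and by the
hypothesis it is a sink, so no edge leaves it; in the same way `δ` has no edge from 2 to an
unlabelled vertex. Being acyclic with every unlabelled vertex having an ingoing and an outgoing
edge, `δ` then has no unlabelled vertices at all, all its edges go from 2 to 1, and lifting them
back through the two extensions shows that every edge of `γ` has one of the two allowed shapes.
-/

open Sum Relation Function

theorem Fin.eq_zero_or_eq_one (i : Fin 2) : i = 0 ∨ i = 1 := by
  fin_cases i <;> simp

theorem wellFounded_transGen_of_irrefl {α : Type*} [Finite α] {r : α → α → Prop}
    (h : ∀ x, ¬ TransGen r x x) : WellFounded (TransGen r) :=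
  haveI : IsTrans α (TransGen r) := ⟨fun _ _ _ => TransGen.trans⟩
  haveI : Std.Irrefl (TransGen r) := ⟨h⟩
  Finite.wellFounded_of_trans_of_irrefl _

theorem val_qmap_zero {m : ℕ} (j : Fin (m + 1)) (i : Fin (0 + m + 1)) :
    (qmap 0 j i).val = i.val := by
  unfold qmap
  split_ifs
  · rfl
  · omega
  · exact Nat.sub_zero _

namespace PreGraph

variable {n : ℕ} {δ : PreGraph n}

def IsHitFrom (γ : PreGraph n) (i : Fin n) (w : γ.V) : Prop :=
  ∃ e, γ.src e = inl i ∧ γ.tgt e = inr w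

theorem Reaches.eq_of_forall_src_ne {x y : Fin n ⊕ δ.V} (h : δ.Reaches x y)
    (hx : ∀ e, δ.src e ≠ x) : y = x := by
  rcases h.cases_head with rfl | ⟨_, ⟨e, hs, _⟩, _⟩
  · rfl
  · exact absurd hs (hx e)

theorem NoCycles.not_transGen_self (h : δ.NoCycles) (x : Fin n ⊕ δ.V) :
    ¬ TransGen δ.Step x x := by
  intro hx
  obtain ⟨_, ⟨e, rfl, rfl⟩, hy⟩ := TransGen.head'_iff.mp hx
  exact h e hy

theorem NoCycles.exists_reaches_inl (h : δ.NoCycles) (hout : ∀ w : δ.V, ∃ e, δ.src e = inr w)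
    (x : Fin n ⊕ δ.V) : ∃ i, δ.Reaches x (inl i) := by
  have hwf : WellFounded (TransGen (swap δ.Step)) :=
    wellFounded_transGen_of_irrefl fun x hx => h.not_transGen_self x (transGen_swap.mp hx)
  induction x using hwf.induction with
  | _ x ih =>
    rcases x with i | w
    · exact ⟨i, .refl⟩
    · obtain ⟨e, hs⟩ := hout w
      have hstep : δ.Step (inr w) (δ.tgt e) := ⟨e, hs, rfl⟩
      obtain ⟨i, hi⟩ := ih _ (transGen_swap.mpr (.single hstep))
      exact ⟨i, .head hstep hi⟩

theorem NoCycles.exists_inl_reaches (h : δ.NoCycles) (hin : ∀ w : δ.V, ∃ e, δ.tgt e = inr w)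
    (x : Fin n ⊕ δ.V) : ∃ i, δ.Reaches (inl i) x := by
  induction x using (wellFounded_transGen_of_irrefl h.not_transGen_self).induction with
  | _ x ih =>
    rcases x with i | w
    · exact ⟨i, .refl⟩
    · obtain ⟨e, ht⟩ := hin w
      have hstep : δ.Step (δ.src e) (inr w) := ⟨e, rfl, ht⟩
      obtain ⟨i, hi⟩ := ih _ (.single hstep)
      exact ⟨i, .tail hi hstep⟩

end PreGraph

namespace G3two

variable {δ : PreGraph 2}

theorem src_ne_zero (h : G3two δ) (e : δ.E) : δ.src e ≠ inl 0 := by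
  intro hs
  obtain ⟨i, hi⟩ := h.2.1.exists_reaches_inl (fun w => (h.1 w).2) (δ.tgt e)
  rcases i.eq_zero_or_eq_one with rfl | rfl
  · exact h.2.1 e (hs ▸ hi)
  · exact h.2.2 (.head ⟨e, hs, rfl⟩ hi)

theorem eq_zero_of_reaches (h : G3two δ) {x : Fin 2 ⊕ δ.V} (hx : δ.Reaches (inl 0) x) :
    x = inl 0 :=
  hx.eq_of_forall_src_ne h.src_ne_zero

/-- Walking back from an unlabelled vertex ends at a label, which cannot be `0`; so the walk
starts with an edge from `1` to an unlabelled vertex. -/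
theorem isEmpty_V (h : G3two δ)
    (hδ : ∀ (e : δ.E) (z : δ.V), δ.src e = inl 1 → δ.tgt e ≠ inr z) : IsEmpty δ.V := by
  refine ⟨fun z => ?_⟩
  obtain ⟨i, hi⟩ := h.2.1.exists_inl_reaches (fun w => (h.1 w).1) (inr z)
  rcases i.eq_zero_or_eq_one with rfl | rfl
  · exact inr_ne_inl (h.eq_zero_of_reaches hi)
  rcases hi.cases_head with hz | ⟨y, ⟨e, hs, ht⟩, hy⟩
  · exact inl_ne_inr hz
  rcases y with i | z'
  · rcases i.eq_zero_or_eq_one with rfl | rfl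
    · exact inr_ne_inl (h.eq_zero_of_reaches hy)
    · exact h.2.1 e (by rw [ht, hs]; exact .refl)
  · exact hδ e z' hs ht

end G3two

theorem g3two_iff_of_isEmpty {δ : PreGraph 2} [IsEmpty δ.V] :
    G3two δ ↔ ∀ e, δ.src e = inl 1 ∧ δ.tgt e = inl 0 := by
  have hlab : ∀ x : Fin 2 ⊕ δ.V, x = inl 0 ∨ x = inl 1 := by
    rintro (i | w)
    · exact i.eq_zero_or_eq_one.imp (congrArg inl) (congrArg inl)
    · exact isEmptyElim w
  constructor
  · intro h e
    have hs : δ.src e = inl 1 := (hlab _).resolve_left (h.src_ne_zero e)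
    refine ⟨hs, (hlab _).resolve_right fun ht => h.2.1 e ?_⟩
    rw [ht, hs]
    exact .refl
  · intro h
    have hsrc : ∀ e, δ.src e ≠ inl 0 := fun e => by simp [(h e).1]
    refine ⟨isEmptyElim, fun e he => ?_, fun he => ?_⟩
    · rw [(h e).2] at he
      simpa [(h e).1] using he.eq_of_forall_src_ne hsrc
    · simpa using he.eq_of_forall_src_ne hsrc

namespace GMor

variable {n m : ℕ} {α : PreGraph n} {β : PreGraph m} (f : GMor α β)

theorem src_eq_of_onE_eq_inl {e : α.E} {e' : β.E} (h : f.onE e = inl e') :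
    β.src e' = f.onV (α.src e) := by
  simpa [h, PreGraph.ends] using congrArg Prod.fst (f.hE e)

theorem tgt_eq_of_onE_eq_inl {e : α.E} {e' : β.E} (h : f.onE e = inl e') :
    β.tgt e' = f.onV (α.tgt e) := by
  simpa [h, PreGraph.ends] using congrArg Prod.snd (f.hE e)

end GMor

namespace IsExtension

variable {α : PreGraph 1} {β γ : PreGraph 2} {j : Fin 2} {u : GMor α β} {v : GMor β γ}

theorem v_onV_inl (h : IsExtension j u v) (i : Fin 2) : v.onV (inl i) = inl i := by
  rw [v.hL, h.vLab]
  exact congrArg inl (Fin.ext (val_qmap_zero j i))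

theorem u_onV_inl (h : IsExtension j u v) : u.onV (inl 0) = inl j := by
  rw [u.hL]
  exact congrArg inl (Fin.ext (by simpa using h.uLab 0))

theorem mem_range_u_onV_iff (h : IsExtension j u v) (x : Fin 2 ⊕ β.V) :
    x ∈ Set.range u.onV ↔ v.onV x = inl j := by
  rw [h.imV]
  rfl

theorem exists_u_onV_inr (h : IsExtension j u v) (a : α.V) : ∃ w, u.onV (inr a) = inr w := by
  rcases hx : u.onV (inr a) with i | w
  · have hi : i = j := by
      simpa [h.v_onV_inl] using (h.mem_range_u_onV_iff _).mp ⟨inr a, hx⟩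
    subst hi
    exact absurd (h.uVinj (hx.trans h.u_onV_inl.symm)) inr_ne_inl
  · exact ⟨w, rfl⟩

theorem eq_inl_or_eq_u_onV_of_v_onV_eq_inl (h : IsExtension j u v) {x : Fin 2 ⊕ β.V}
    (hx : v.onV x = inl j) : x = inl j ∨ ∃ a, x = u.onV (inr a) := by
  obtain ⟨i | a, rfl⟩ := (h.mem_range_u_onV_iff x).mpr hx
  · exact .inl (by rw [Subsingleton.elim i 0, h.u_onV_inl])
  · exact .inr ⟨a, rfl⟩

theorem eq_of_v_onV_eq_inl (h : IsExtension j u v) {i : Fin 2} (hij : i ≠ j)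
    {x : Fin 2 ⊕ β.V} (hx : v.onV x = inl i) : x = inl i := by
  have hnot : ∀ y, v.onV y = inl i → y ∉ Set.range u.onV := fun y hy hmem =>
    hij (inl_injective (hy.symm.trans ((h.mem_range_u_onV_iff y).mp hmem)))
  exact h.compVinj (hnot x hx) (hnot _ (h.v_onV_inl i)) (hx.trans (h.v_onV_inl i).symm)

theorem eq_of_v_onV_eq_inr (h : IsExtension j u v) {z : γ.V} {x y : Fin 2 ⊕ β.V}
    (hx : v.onV x = inr z) (hy : v.onV y = inr z) : x = y := by
  have hnot : ∀ x', v.onV x' = inr z → x' ∉ Set.range u.onV := fun x' hx' hmem =>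
    inr_ne_inl (hx'.symm.trans ((h.mem_range_u_onV_iff x').mp hmem))
  exact h.compVinj (hnot x hx) (hnot y hy) (hx.trans hy.symm)

theorem exists_eq_inr_of_v_onV_eq_inr (h : IsExtension j u v) {x : Fin 2 ⊕ β.V} {z : γ.V}
    (hx : v.onV x = inr z) : ∃ w, x = inr w := by
  rcases x with i | w
  · exact absurd (hx.symm.trans (h.v_onV_inl i)) inr_ne_inl
  · exact ⟨w, rfl⟩

theorem exists_lift (h : IsExtension j u v) (e' : γ.E) :
    ∃ e, γ.src e' = v.onV (β.src e) ∧ γ.tgt e' = v.onV (β.tgt e) := by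
  obtain ⟨e, he⟩ := h.vEsurj e'
  exact ⟨e, v.src_eq_of_onE_eq_inl he, v.tgt_eq_of_onE_eq_inl he⟩

theorem exists_src_eq_of_v_onV_eq_inr (h : IsExtension j u v) {x : Fin 2 ⊕ β.V} {z : γ.V}
    (hx : v.onV x = inr z) (hz : ∃ e, γ.src e = inr z) : ∃ e, β.src e = x := by
  obtain ⟨e', he'⟩ := hz
  obtain ⟨e, hs, -⟩ := h.exists_lift e'
  exact ⟨e, h.eq_of_v_onV_eq_inr (hs.symm.trans he') hx⟩

theorem edge_cases (h : IsExtension j u v) (hα : G2one α) (e : β.E) :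
    (β.src e = inl j ∧ ∃ w, β.tgt e = inr w ∧ v.onV (inr w) = inl j) ∨
      ∃ e', v.onE e = inl e' := by
  by_cases hu : ∃ a, u.onE a = inl e
  · obtain ⟨a, ha⟩ := hu
    obtain ⟨hs, b, ht⟩ := hα a
    obtain ⟨w, hw⟩ := h.exists_u_onV_inr b
    refine .inl ⟨?_, w, ?_, (h.mem_range_u_onV_iff _).mp ⟨inr b, hw⟩⟩
    · rw [u.src_eq_of_onE_eq_inl ha, hs, h.u_onV_inl]
    · rw [u.tgt_eq_of_onE_eq_inl ha, ht, hw]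
  · exact .inr (h.compEedge e hu)

theorem exists_edge_to_u_onV (h : IsExtension j u v) (hα : G2one α) (hαg : α.IsGraph)
    (a : α.V) : ∃ e, β.src e = inl j ∧ β.tgt e = u.onV (inr a) := by
  obtain ⟨b, hb⟩ := hαg a
  have ht : α.tgt b = inr a := hb.resolve_left fun hs => by simp [(hα b).1] at hs
  obtain ⟨e, he⟩ := h.uEedge b
  refine ⟨e, ?_, ?_⟩
  · rw [u.src_eq_of_onE_eq_inl he, (hα b).1, h.u_onV_inl]
  · rw [u.tgt_eq_of_onE_eq_inl he, ht]

end IsExtension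

namespace PreGraph

variable (γ : PreGraph 2) (j : Fin 2) (S : γ.V → Prop)

def IsStarEdge (e : γ.E) : Prop := γ.src e = inl j ∧ ∃ w, γ.tgt e = inr w ∧ S w

def IsStarVertex (w : γ.V) : Prop := S w ∧ γ.IsHitFrom j w

/-- Only applied to targets of star edges, so the fallback `inl 0` is never reached. -/
noncomputable def toStar : Fin 2 ⊕ γ.V → Fin 1 ⊕ {w // γ.IsStarVertex j S w}
  | inl _ => inl 0
  | inr w => if h : γ.IsStarVertex j S w then inr ⟨w, h⟩ else inl 0

noncomputable def star : PreGraph 1 where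
  V := {w // γ.IsStarVertex j S w}
  E := {e // γ.IsStarEdge j S e}
  finV := inferInstance
  finE := inferInstance
  src _ := inl 0
  tgt e := γ.toStar j S (γ.tgt e.1)

noncomputable def contractV : Fin 2 ⊕ γ.V → Fin 2 ⊕ {w // ¬ γ.IsStarVertex j S w}
  | inl i => inl i
  | inr w => if h : γ.IsStarVertex j S w then inl j else inr ⟨w, h⟩

noncomputable def contract : PreGraph 2 where
  V := {w // ¬ γ.IsStarVertex j S w}
  E := {e // ¬ γ.IsStarEdge j S e}
  finV := inferInstance
  finE := inferInstance
  src e := γ.contractV j S (γ.src e.1)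
  tgt e := γ.contractV j S (γ.tgt e.1)

variable {γ j S}

theorem toStar_inr_of_isStarVertex {w : γ.V} (hw : γ.IsStarVertex j S w) :
    γ.toStar j S (inr w) = inr ⟨w, hw⟩ :=
  dif_pos hw

theorem contractV_inl (i : Fin 2) : γ.contractV j S (inl i) = inl i :=
  rfl

theorem contractV_inr_of_isStarVertex {w : γ.V} (hw : γ.IsStarVertex j S w) :
    γ.contractV j S (inr w) = inl j :=
  dif_pos hw

theorem contractV_inr_of_not_isStarVertex {w : γ.V} (hw : ¬ γ.IsStarVertex j S w) :
    γ.contractV j S (inr w) = inr ⟨w, hw⟩ :=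
  dif_neg hw

theorem contract_src (e : (γ.contract j S).E) :
    (γ.contract j S).src e = γ.contractV j S (γ.src e.1) :=
  rfl

theorem contract_tgt (e : (γ.contract j S).E) :
    (γ.contract j S).tgt e = γ.contractV j S (γ.tgt e.1) :=
  rfl

theorem map_val_contractV {x : Fin 2 ⊕ γ.V} (hx : γ.contractV j S x ≠ inl j) :
    Sum.map id Subtype.val (γ.contractV j S x) = x := by
  rcases x with i | w
  · rfl
  · by_cases hw : γ.IsStarVertex j S w
    · exact absurd (contractV_inr_of_isStarVertex hw) hx
    · rw [contractV_inr_of_not_isStarVertex hw]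
      rfl

variable (γ j S)

noncomputable def starIncl : GMor (γ.star j S) γ where
  onL _ := j
  monoL := monotone_const
  onV := Sum.elim (fun _ => inl j) (fun w => inr w.1)
  hL _ := rfl
  onE e := inl e.1
  hE e := by
    obtain ⟨hs, w, ht, hS⟩ := e.2
    have hw : γ.IsStarVertex j S w := ⟨hS, e.1, hs, ht⟩
    simp [ends, star, hs, ht, toStar_inr_of_isStarVertex hw]

noncomputable def contractMap : GMor γ (γ.contract j S) where
  onL := id
  monoL := monotone_id
  onV := γ.contractV j S
  hL _ := rfl
  onE e := if h : γ.IsStarEdge j S e then inr (inl j) else inl ⟨e, h⟩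
  hE e := by
    split_ifs with he
    · obtain ⟨hs, w, ht, hS⟩ := he
      show (inl j, inl j) = (γ.contractV j S (γ.src e), γ.contractV j S (γ.tgt e))
      rw [hs, ht, contractV_inr_of_isStarVertex ⟨hS, e, hs, ht⟩]
      rfl
    · rfl

variable {γ j S}

theorem mem_range_starIncl_onV_iff (x : Fin 2 ⊕ γ.V) :
    x ∈ Set.range (γ.starIncl j S).onV ↔ γ.contractV j S x = inl j := by
  rcases x with i | w
  · simp [starIncl, contractV_inl, eq_comm]
  constructor
  · rintro ⟨i | ⟨w', hw'⟩, h⟩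
    · exact absurd h inl_ne_inr
    · obtain rfl : w' = w := inr_injective h
      exact contractV_inr_of_isStarVertex hw'
  · intro h
    by_cases hw : γ.IsStarVertex j S w
    · exact ⟨inr ⟨w, hw⟩, rfl⟩
    · rw [contractV_inr_of_not_isStarVertex hw] at h
      exact absurd h inr_ne_inl

theorem isExtension_contract : IsExtension j (γ.starIncl j S) (γ.contractMap j S) where
  uLab i := by
    show j.val = j.val + i.val
    have := i.isLt
    omega
  vLab i := Fin.ext (val_qmap_zero j i).symm
  uVinj := Injective.sumElim (fun _ _ _ => Subsingleton.elim (α := Fin 1) _ _)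
    (fun _ _ h => Subtype.ext (inr_injective h)) (fun _ _ => inl_ne_inr)
  uEedge e := ⟨e.1, rfl⟩
  uEinj _ _ h := Subtype.ext (inl_injective h)
  vVsurj := by
    rintro (i | ⟨w, hw⟩)
    · exact ⟨inl i, rfl⟩
    · exact ⟨inr w, contractV_inr_of_not_isStarVertex hw⟩
  vEsurj := by
    rintro ⟨e, he⟩
    exact ⟨e, dif_neg he⟩
  imV := Set.ext mem_range_starIncl_onV_iff
  imE := by
    ext e
    simp only [starIncl, contractMap, Set.mem_ofPred_eq, inl.injEq, dite_eq_left_iff,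
      reduceCtorEq, imp_false, not_not]
    exact ⟨fun ⟨a, ha⟩ => ha ▸ a.2, fun h => ⟨⟨e, h⟩, rfl⟩⟩
  compEedge e he := by
    have he' : ¬ γ.IsStarEdge j S e := fun h => he ⟨⟨e, h⟩, rfl⟩
    exact ⟨⟨e, he'⟩, dif_neg he'⟩
  compVinj x hx y hy hxy := by
    rw [← map_val_contractV ((mem_range_starIncl_onV_iff x).not.mp hx),
      ← map_val_contractV ((mem_range_starIncl_onV_iff y).not.mp hy)]
    exact congrArg _ hxy
  compEinj a ha b hb hab := by
    have ha' : ¬ γ.IsStarEdge j S a := fun h => ha ⟨⟨a, h⟩, rfl⟩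
    have hb' : ¬ γ.IsStarEdge j S b := fun h => hb ⟨⟨b, h⟩, rfl⟩
    simp only [contractMap, dif_neg ha', dif_neg hb'] at hab
    exact congrArg Subtype.val (inl_injective hab)

theorem isGraph_star : (γ.star j S).IsGraph := by
  rintro ⟨w, hw⟩
  obtain ⟨hS, e, hs, ht⟩ := id hw
  refine ⟨⟨e, hs, w, ht, hS⟩, .inr ?_⟩
  change γ.toStar j S (γ.tgt e) = _
  rw [ht, toStar_inr_of_isStarVertex hw]
  rfl

theorem g2one_star : G2one (γ.star j S) := by
  rintro ⟨e, hs, w, ht, hS⟩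
  have hw : γ.IsStarVertex j S w := ⟨hS, e, hs, ht⟩
  refine ⟨rfl, ⟨w, hw⟩, ?_⟩
  change γ.toStar j S (γ.tgt e) = _
  rw [ht, toStar_inr_of_isStarVertex hw]
  rfl

theorem IsGraph.contract (hγ : γ.IsGraph) : (γ.contract j S).IsGraph := by
  rintro ⟨w, hw⟩
  obtain ⟨e, he⟩ := hγ w
  have hne : ¬ γ.IsStarEdge j S e := by
    rintro ⟨hs, w', ht, hS⟩
    have ht' : γ.tgt e = inr w := he.resolve_left (by rw [hs]; exact inl_ne_inr)
    obtain rfl : w' = w := inr_injective (ht.symm.trans ht')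
    exact hw ⟨hS, e, hs, ht'⟩
  refine ⟨⟨e, hne⟩, he.imp (fun h => ?_) (fun h => ?_)⟩
  · change γ.contractV j S (γ.src e) = _
    rw [h, contractV_inr_of_not_isStarVertex hw]
    rfl
  · change γ.contractV j S (γ.tgt e) = _
    rw [h, contractV_inr_of_not_isStarVertex hw]
    rfl

theorem IsHitFrom.contract {i : Fin 2} (hij : i ≠ j) {w : γ.V} (h : γ.IsHitFrom i w)
    (hw : ¬ γ.IsStarVertex j S w) : (γ.contract j S).IsHitFrom i ⟨w, hw⟩ := by
  obtain ⟨e, hs, ht⟩ := h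
  have hne : ¬ γ.IsStarEdge j S e := fun he => hij (inl_injective (hs.symm.trans he.1))
  refine ⟨⟨e, hne⟩, ?_, ?_⟩
  · change γ.contractV j S (γ.src e) = _
    rw [hs, contractV_inl]
    rfl
  · change γ.contractV j S (γ.tgt e) = _
    rw [ht, contractV_inr_of_not_isStarVertex hw]
    rfl

end PreGraph

namespace G2two

open PreGraph

variable {γ : PreGraph 2}

theorem src_eq_inl (hγ : G2two γ) (e : γ.E) : γ.src e = inl 0 ∨ γ.src e = inl 1 := by
  rcases hγ e with ⟨hs, -⟩ | ⟨hs, -⟩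
  exacts [hs, .inr hs]

variable (γ) in
/-- The middle graph `β'` of the decomposition of `γ ∈ 𝒢₂(2)`. -/
noncomputable abbrev middle : PreGraph 2 := γ.contract 1 fun w => ¬ γ.IsHitFrom 0 w

variable (γ) in
/-- The base `δ ∈ 𝒢₃(2)` of the decomposition of `γ ∈ 𝒢₂(2)`. -/
noncomputable abbrev base : PreGraph 2 := (middle γ).contract 0 fun _ => True

theorem isEmpty_V_base (hg : γ.IsGraph) (hγ : G2two γ) : IsEmpty (base γ).V := by
  refine ⟨fun ⟨⟨w, hw₂⟩, hw₁⟩ => ?_⟩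
  by_cases h0 : γ.IsHitFrom 0 w
  · exact hw₁ ⟨trivial, h0.contract (by decide) hw₂⟩
  · obtain ⟨e, he⟩ := hg w
    have ht : γ.tgt e = inr w :=
      he.resolve_left fun hs => by rcases hγ.src_eq_inl e with h | h <;> simp [h] at hs
    rcases hγ.src_eq_inl e with hs | hs
    · exact h0 ⟨e, hs, ht⟩
    · exact hw₂ ⟨h0, e, hs, ht⟩

theorem base_edges (hγ : G2two γ) (e : (base γ).E) :
    (base γ).src e = inl 1 ∧ (base γ).tgt e = inl 0 := by
  simp only [contract_src, contract_tgt]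
  rcases hγ e.1.1 with ⟨hs | hs, w, ht⟩ | ⟨hs, ht⟩
  · have hw₂ : ¬ γ.IsStarVertex 1 (fun w => ¬ γ.IsHitFrom 0 w) w := fun h => h.1 ⟨_, hs, ht⟩
    refine absurd ⟨?_, ⟨w, hw₂⟩, ?_, trivial⟩ e.2
    · rw [contract_src, hs, contractV_inl]
      rfl
    · rw [contract_tgt, ht, contractV_inr_of_not_isStarVertex hw₂]
      rfl
  · by_cases h0 : γ.IsHitFrom 0 w
    · have hw₂ : ¬ γ.IsStarVertex 1 (fun w => ¬ γ.IsHitFrom 0 w) w := fun h => h.1 h0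
      rw [hs, ht, contractV_inr_of_not_isStarVertex hw₂]
      exact ⟨rfl, contractV_inr_of_isStarVertex ⟨trivial, h0.contract (by decide) hw₂⟩⟩
    · exact absurd ⟨hs, w, ht, h0⟩ e.1.2
  · rw [hs, ht]
    exact ⟨rfl, rfl⟩

theorem g4two (hg : γ.IsGraph) (hγ : G2two γ) : G4two γ :=
  have := isEmpty_V_base hg hγ
  ⟨_, _, base γ, middle γ, _, _, _, _, isGraph_star, isGraph_star, hg.contract.contract,
    hg.contract, g2one_star, g2one_star, g3two_iff_of_isEmpty.mpr (base_edges hγ),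
    isExtension_contract, isExtension_contract⟩

end G2two

section Cancellation

open PreGraph

variable {γ β' δ : PreGraph 2} {α₁ α₂ : PreGraph 1} {u₁ : GMor α₁ β'} {v₁ : GMor β' δ}
  {u₂ : GMor α₂ γ} {v₂ : GMor γ β'}

/-- No edge of `δ ∈ 𝒢₃(2)` leaves the label `0`, so an edge of `γ` leaving `0` must be
absorbed by the first extension. -/
theorem onV_onV_tgt_eq_zero_of_src_eq_zero (hx₁ : IsExtension (0 : Fin 2) u₁ v₁)
    (hx₂ : IsExtension (1 : Fin 2) u₂ v₂) (hα₁ : G2one α₁) (hα₂ : G2one α₂) (hδ : G3two δ)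
    {e : γ.E} (hs : γ.src e = inl 0) : v₁.onV (v₂.onV (γ.tgt e)) = inl 0 := by
  rcases hx₂.edge_cases hα₂ e with ⟨hs', -⟩ | ⟨e', he'⟩
  · exact absurd (hs.symm.trans hs') (by simp)
  have hs' : β'.src e' = inl 0 := by rw [v₂.src_eq_of_onE_eq_inl he', hs, hx₂.v_onV_inl]
  rw [← v₂.tgt_eq_of_onE_eq_inl he']
  rcases hx₁.edge_cases hα₁ e' with ⟨-, w, ht, hw⟩ | ⟨e'', he''⟩
  · rw [ht, hw]
  · refine absurd ?_ (hδ.src_ne_zero e'')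
    rw [v₁.src_eq_of_onE_eq_inl he'', hs', hx₁.v_onV_inl]

variable (hx₁ : IsExtension (0 : Fin 2) u₁ v₁) (hx₂ : IsExtension (1 : Fin 2) u₂ v₂)
  (hα₁ : G2one α₁) (hα₂ : G2one α₂) (hα₂g : α₂.IsGraph) (hδ : G3two δ)
  (hyp : ∀ (e : γ.E) (w : γ.V), γ.src e = inl 1 → γ.tgt e = inr w →
    γ.IsHitFrom 0 w ∨ γ.IsSink w)
include hx₁ hx₂ hα₁ hα₂ hα₂g hδ hyp

/-- A vertex of the second star is hit from the label `1`, so by `hyp` it is either hit from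
`0`, which would send it to `0` in `δ` instead of to `1`, or a sink. -/
theorem src_ne_u_onV_inr (e : γ.E) (a : α₂.V) : γ.src e ≠ u₂.onV (inr a) := by
  intro he
  obtain ⟨g, hgs, hgt⟩ := hx₂.exists_edge_to_u_onV hα₂ hα₂g a
  obtain ⟨w, hw⟩ := hx₂.exists_u_onV_inr a
  rw [hw] at hgt he
  rcases hyp g w hgs hgt with ⟨e₀, hs₀, ht₀⟩ | hsink
  · have h := onV_onV_tgt_eq_zero_of_src_eq_zero hx₁ hx₂ hα₁ hα₂ hδ hs₀
    rw [ht₀, (hx₂.mem_range_u_onV_iff _).mp ⟨inr a, hw⟩, hx₁.v_onV_inl] at h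
    exact absurd h (by simp)
  · exact hsink ⟨e, he⟩

theorem src_eq_one_of_v_onV_src_eq_one {e : γ.E} (he : v₂.onV (γ.src e) = inl 1) :
    γ.src e = inl 1 := by
  rcases hx₂.eq_inl_or_eq_u_onV_of_v_onV_eq_inl he with h | ⟨a, ha⟩
  · exact h
  · exact absurd ha (src_ne_u_onV_inr hx₁ hx₂ hα₁ hα₂ hα₂g hδ hyp e a)

/-- Such an edge lifts to an edge of `γ` from `1` to a vertex `w` that is not hit from `0`
(it would be sent to `0`, not to `z`) and is not a sink (an edge leaving `z` lifts to one
leaving `w`). -/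
theorem tgt_ne_inr_of_src_eq_one (e'' : δ.E) (z : δ.V) (hs : δ.src e'' = inl 1) :
    δ.tgt e'' ≠ inr z := by
  intro ht
  obtain ⟨e', hs', ht'⟩ := hx₁.exists_lift e''
  obtain ⟨w', hw'⟩ := hx₁.exists_eq_inr_of_v_onV_eq_inr (ht'.symm.trans ht)
  obtain ⟨e, hse, hte⟩ := hx₂.exists_lift e'
  obtain ⟨w, hw⟩ := hx₂.exists_eq_inr_of_v_onV_eq_inr (hte.symm.trans hw')
  have hv₁ : v₁.onV (inr w') = inr z := hw' ▸ ht'.symm.trans ht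
  have hv₂ : v₂.onV (inr w) = inr w' := hw ▸ hte.symm.trans hw'
  have hsrc : γ.src e = inl 1 := src_eq_one_of_v_onV_src_eq_one hx₁ hx₂ hα₁ hα₂ hα₂g hδ hyp
    (hse.symm.trans (hx₁.eq_of_v_onV_eq_inl (by decide) (hs'.symm.trans hs)))
  rcases hyp e w hsrc hw with ⟨e₀, hs₀, ht₀⟩ | hsink
  · have h := onV_onV_tgt_eq_zero_of_src_eq_zero hx₁ hx₂ hα₁ hα₂ hδ hs₀
    rw [ht₀, hv₂, hv₁] at h
    exact inr_ne_inl h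
  · exact hsink (hx₂.exists_src_eq_of_v_onV_eq_inr hv₂
      (hx₁.exists_src_eq_of_v_onV_eq_inr hv₁ (hδ.1 z).2))

theorem g2two_of_isExtension : G2two γ := by
  have := hδ.isEmpty_V (tgt_ne_inr_of_src_eq_one hx₁ hx₂ hα₁ hα₂ hα₂g hδ hyp)
  intro e
  rcases hx₂.edge_cases hα₂ e with ⟨hs, w, ht, -⟩ | ⟨e', he'⟩
  · exact .inl ⟨.inr hs, w, ht⟩
  have hs' := v₂.src_eq_of_onE_eq_inl he'
  have ht' := v₂.tgt_eq_of_onE_eq_inl he'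
  rcases hx₁.edge_cases hα₁ e' with ⟨hs₁, w', ht₁, -⟩ | ⟨e'', he''⟩
  · exact .inl ⟨.inl (hx₂.eq_of_v_onV_eq_inl (by decide) (hs'.symm.trans hs₁)),
      hx₂.exists_eq_inr_of_v_onV_eq_inr (ht'.symm.trans ht₁)⟩
  obtain ⟨hd₁, hd₀⟩ := g3two_iff_of_isEmpty.mp hδ e''
  rw [v₁.src_eq_of_onE_eq_inl he''] at hd₁
  rw [v₁.tgt_eq_of_onE_eq_inl he''] at hd₀
  have hsrc : γ.src e = inl 1 := src_eq_one_of_v_onV_src_eq_one hx₁ hx₂ hα₁ hα₂ hα₂g hδ hyp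
    (hs'.symm.trans (hx₁.eq_of_v_onV_eq_inl (by decide) hd₁))
  rcases hx₁.eq_inl_or_eq_u_onV_of_v_onV_eq_inl hd₀ with ht₁ | ⟨a, ha⟩
  · exact .inr ⟨hsrc, hx₂.eq_of_v_onV_eq_inl (by decide) (ht'.symm.trans ht₁)⟩
  · obtain ⟨w', hw'⟩ := hx₁.exists_u_onV_inr a
    exact .inl ⟨.inr hsrc, hx₂.exists_eq_inr_of_v_onV_eq_inr (ht'.symm.trans (ha.trans hw'))⟩

end Cancellation

theorem G4two.g2two {γ : PreGraph 2} (hγ : G4two γ)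
    (hyp : ∀ (e : γ.E) (w : γ.V), γ.src e = inl 1 → γ.tgt e = inr w →
      γ.IsHitFrom 0 w ∨ γ.IsSink w) : G2two γ :=
  let ⟨_, _, _, _, _, _, _, _, _, hα₂g, _, _, hα₁, hα₂, hδ, hx₁, hx₂⟩ := hγ
  g2two_of_isExtension hx₁ hx₂ hα₁ hα₂ hα₂g hδ hyp

/-- (i) `𝒢₂(2) ⊆ 𝒢₄(2)`.
(ii) If `γ ∈ 𝒢₄(2)` and no edge outgoing from the labelled vertex `2` has as target an
unlabelled vertex that is neither a target of an edge outgoing from the labelled vertex `1`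
(i.e. a vertex of the subgraph `α`) nor a sink of `γ`, then `γ ∈ 𝒢₂(2)`. -/
theorem G2_subset_G4_and_cancellation :
    (∀ γ : PreGraph 2, γ.IsGraph → G2two γ → G4two γ) ∧
    (∀ γ : PreGraph 2, γ.IsGraph → G4two γ →
      (∀ (e : γ.E) (w : γ.V), γ.src e = Sum.inl 1 → γ.tgt e = Sum.inr w →
        (∃ e' : γ.E, γ.src e' = Sum.inl 0 ∧ γ.tgt e' = Sum.inr w) ∨ γ.IsSink w) →
      G2two γ) :=
  ⟨fun _ hg hγ => hγ.g4two hg, fun _ _ hγ hyp => hγ.g2two hyp⟩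
end

section
/- For every γ ∈ 𝒢₁₃(1): e(γ) ≥ v(γ), and setting m := e(γ) − v(γ), one has v(γ) ≤ 4m and e(γ) ≤ 5m. (This is the paper's claim that any graph in 𝒢₁₃(1) contributing at order ħ^m to the 'purely quantum' operator Ω_{λV} has at most 4m vertices and 5m edges, so that at each fixed order in ħ only finitely many graphs contribute and the coupling constant need not be treated as a formal parameter.) -/
/-- A finite multigraph with directed and undirected edges, `n` labelled vertices (the
elements of `Fin n`), and a finite set `V` of unlabelled vertices.  Directed edges have a
source and a target; undirected edges have two endpoints `enda`, `endb`. -/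
structure MixedGraph (n : ℕ) where
  V : Type
  Ed : Type
  Eu : Type
  finV : Finite V
  finEd : Finite Ed
  finEu : Finite Eu
  src : Ed → Fin n ⊕ V
  tgt : Ed → Fin n ⊕ V
  enda : Eu → Fin n ⊕ V
  endb : Eu → Fin n ⊕ V

attribute [instance] MixedGraph.finV MixedGraph.finEd MixedGraph.finEu

namespace MixedGraph

/-- One directed step along a directed edge. -/
def Step {n : ℕ} (γ : MixedGraph n) (x y : Fin n ⊕ γ.V) : Prop :=
  ∃ e : γ.Ed, γ.src e = x ∧ γ.tgt e = y

/-- Existence of a directed path (possibly empty). -/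
def Reaches {n : ℕ} (γ : MixedGraph n) : (Fin n ⊕ γ.V) → (Fin n ⊕ γ.V) → Prop :=
  Relation.ReflTransGen γ.Step

/-- There are no directed cycles. -/
def NoCycles {n : ℕ} (γ : MixedGraph n) : Prop :=
  ∀ e : γ.Ed, ¬ γ.Reaches (γ.tgt e) (γ.src e)

/-- Number of ingoing directed edges at an unlabelled vertex. -/
noncomputable def indeg {n : ℕ} (γ : MixedGraph n) (w : γ.V) : ℕ :=
  Nat.card {e : γ.Ed // γ.tgt e = Sum.inr w}

/-- Number of outgoing directed edges at an unlabelled vertex. -/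
noncomputable def outdeg {n : ℕ} (γ : MixedGraph n) (w : γ.V) : ℕ :=
  Nat.card {e : γ.Ed // γ.src e = Sum.inr w}

/-- Number of undirected edge-ends at an unlabelled vertex. -/
noncomputable def udeg {n : ℕ} (γ : MixedGraph n) (w : γ.V) : ℕ :=
  Nat.card {e : γ.Eu // γ.enda e = Sum.inr w} + Nat.card {e : γ.Eu // γ.endb e = Sum.inr w}

end MixedGraph

open Finset in
lemma fiber_count {α V : Type} [Fintype α] [Fintype V] (f : α → Fin 1 ⊕ V) :
    Nat.card α = Nat.card {a // f a = Sum.inl 0} + ∑ w : V, Nat.card {a // f a = Sum.inr w} := by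
  classical
  have h := Finset.card_eq_sum_card_fiberwise (s := (univ : Finset α))
    (t := (univ : Finset (Fin 1 ⊕ V))) (f := f) (fun x _ => mem_univ _)
  rw [Fintype.sum_sum_type] at h
  simp only [Nat.card_eq_fintype_card, Fintype.card_subtype]
  rw [Fintype.card, h, Fin.sum_univ_one]


/-- for every `γ ∈ 𝒢₁₃(1)` — i.e. every unlabelled vertex has at least one
ingoing directed edge and at least one further incident edge, no unlabelled vertex has
exactly one ingoing directed edge, one outgoing directed edge and no other incident edges,
the labelled vertex is a source, there are no directed cycles, and no edge is a loop — the
total number of edges `e(γ)` is at least the number `v(γ)` of unlabelled vertices, and with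
`m = e(γ) − v(γ)` one has `v(γ) ≤ 4m` and `e(γ) ≤ 5m`. -/
theorem G13_graph_size_bound (γ : MixedGraph 1)
    (h1 : ∀ w : γ.V, 1 ≤ γ.indeg w ∧ 2 ≤ γ.indeg w + γ.outdeg w + γ.udeg w)
    (h2 : ∀ w : γ.V, ¬ (γ.indeg w = 1 ∧ γ.outdeg w = 1 ∧ γ.udeg w = 0))
    (h3 : ∀ e : γ.Ed, γ.tgt e ≠ Sum.inl 0)
    (h4 : γ.NoCycles)
    (h5d : ∀ e : γ.Ed, γ.src e ≠ γ.tgt e)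
    (h5u : ∀ e : γ.Eu, γ.enda e ≠ γ.endb e) :
    Nat.card γ.V ≤ Nat.card γ.Ed + Nat.card γ.Eu ∧
    Nat.card γ.V ≤ 4 * ((Nat.card γ.Ed + Nat.card γ.Eu) - Nat.card γ.V) ∧
    Nat.card γ.Ed + Nat.card γ.Eu ≤
      5 * ((Nat.card γ.Ed + Nat.card γ.Eu) - Nat.card γ.V) := by
  classical
  cases nonempty_fintype γ.V
  cases nonempty_fintype γ.Ed
  cases nonempty_fintype γ.Eu
  -- edge counts by fibers
  have hin : Nat.card γ.Ed
      = Nat.card {e : γ.Ed // γ.tgt e = Sum.inl 0} + ∑ w : γ.V, γ.indeg w :=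
    fiber_count γ.tgt
  have hin0 : Nat.card {e : γ.Ed // γ.tgt e = Sum.inl 0} = 0 := by
    have : IsEmpty {e : γ.Ed // γ.tgt e = Sum.inl 0} := ⟨fun ⟨e, he⟩ => h3 e he⟩
    exact Nat.card_of_isEmpty
  have hout : Nat.card γ.Ed
      = Nat.card {e : γ.Ed // γ.src e = Sum.inl 0} + ∑ w : γ.V, γ.outdeg w :=
    fiber_count γ.src
  have ha : Nat.card γ.Eu
      = Nat.card {e : γ.Eu // γ.enda e = Sum.inl 0}
        + ∑ w : γ.V, Nat.card {e : γ.Eu // γ.enda e = Sum.inr w} :=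
    fiber_count γ.enda
  have hb : Nat.card γ.Eu
      = Nat.card {e : γ.Eu // γ.endb e = Sum.inl 0}
        + ∑ w : γ.V, Nat.card {e : γ.Eu // γ.endb e = Sum.inr w} :=
    fiber_count γ.endb
  have hud : ∑ w : γ.V, γ.udeg w
      = ∑ w : γ.V, Nat.card {e : γ.Eu // γ.enda e = Sum.inr w}
        + ∑ w : γ.V, Nat.card {e : γ.Eu // γ.endb e = Sum.inr w} := by
    rw [← Finset.sum_add_distrib]; rfl
  -- partition vertices by degree
  set D : γ.V → ℕ := fun w => γ.indeg w + γ.outdeg w + γ.udeg w with hD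
  set T : Finset γ.V := Finset.univ.filter (fun w => 3 ≤ D w) with hT
  set W : Finset γ.V := Finset.univ.filter (fun w => ¬ 3 ≤ D w) with hW
  have hcard : T.card + W.card = Nat.card γ.V := by
    rw [Nat.card_eq_fintype_card, Fintype.card, hT, hW]
    exact Finset.card_filter_add_card_filter_not _
  have hsplit : ∀ g : γ.V → ℕ, ∑ w ∈ T, g w + ∑ w ∈ W, g w = ∑ w : γ.V, g w := by
    intro g; rw [hT, hW]; exact Finset.sum_filter_add_sum_filter_not _ _ _
  -- facts on W : degree-2 vertices, with outdeg 0, indeg ≥ 1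
  have hWdeg : ∀ w ∈ W, D w = 2 ∧ γ.outdeg w = 0 ∧ 1 ≤ γ.indeg w := by
    intro w hw
    rw [hW, Finset.mem_filter] at hw
    have := h1 w; have := h2 w
    have hDw : D w = γ.indeg w + γ.outdeg w + γ.udeg w := rfl
    refine ⟨by omega, by omega, by omega⟩
  have hdW : ∑ w ∈ W, D w = 2 * W.card := by
    rw [Finset.sum_congr rfl (fun w hw => (hWdeg w hw).1), Finset.sum_const, smul_eq_mul,
      Nat.mul_comm]
  have hoW : ∑ w ∈ W, γ.outdeg w = 0 :=
    Finset.sum_eq_zero (fun w hw => (hWdeg w hw).2.1)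
  have hiW : W.card ≤ ∑ w ∈ W, γ.indeg w := by
    have := Finset.card_nsmul_le_sum W (fun w => γ.indeg w) 1 (fun w hw => (hWdeg w hw).2.2)
    simpa using this
  -- facts on T
  have hdT : 3 * T.card ≤ ∑ w ∈ T, D w := by
    have := Finset.card_nsmul_le_sum T D 3 (fun w hw => (Finset.mem_filter.mp hw).2)
    simpa [Nat.mul_comm] using this
  have hiT : T.card ≤ ∑ w ∈ T, γ.indeg w := by
    have := Finset.card_nsmul_le_sum T (fun w => γ.indeg w) 1 (fun w _ => (h1 w).1)
    simpa using this
  have hoT : ∑ w ∈ T, γ.outdeg w + T.card ≤ ∑ w ∈ T, D w := by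
    have : ∑ w ∈ T, (γ.outdeg w + 1) ≤ ∑ w ∈ T, D w := by
      refine Finset.sum_le_sum (fun w _ => ?_)
      have := (h1 w).1
      have hDw : D w = γ.indeg w + γ.outdeg w + γ.udeg w := rfl
      omega
    rwa [Finset.sum_add_distrib, Finset.sum_const, smul_eq_mul, Nat.mul_one] at this
  -- degree sum identity
  have hDsum : ∀ w : γ.V, D w = γ.indeg w + γ.outdeg w + γ.udeg w := fun w => rfl
  have hDtot : ∑ w : γ.V, D w
      = ∑ w : γ.V, γ.indeg w + ∑ w : γ.V, γ.outdeg w + ∑ w : γ.V, γ.udeg w := by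
    rw [hD]; rw [Finset.sum_add_distrib, Finset.sum_add_distrib]
  have hsplitD := hsplit D
  have hsplitI := hsplit (fun w => γ.indeg w)
  have hsplitO := hsplit (fun w => γ.outdeg w)
  omega
end
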